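/- arXiv:1604.02238 — 10 statements merged into one kernel-verified Lean document; each statement's English description precedes it below -/
import Mathlib

section
/- Let k ≥ 1 and let 0 ≤ i ≤ k, 0 ≤ j ≤ k−1. Set ℓ = ik + j(k+1) and q_{i,j} = 1^j (0^k 1^k)^{2i+j} (0^{k+1} 1^{k+1})^j 0^j. Then q_{i,j} is an Abelian square of length 4ℓ each of whose halves contains exactly ℓ zeros and exactly ℓ ones, and q_{i,j} occurs in the word w_k = (0^k 1^k)^{3k} (0^{k+1} 1^{k+1})^k as the fragment starting at position 6k² − 4ik − (2k+1)j + 1 (1-based). -/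
/-- `m`-fold repetition of the word `u`. -/
def repWord {α : Type*} (u : List α) (m : ℕ) : List α :=
  (List.replicate m u).flatten

/-- The word `w_k = (0^k 1^k)^{3k} (0^{k+1} 1^{k+1})^k` over the binary alphabet. -/
def wWord (k : ℕ) : List (Fin 2) :=
  repWord (List.replicate k 0 ++ List.replicate k 1) (3 * k) ++
    repWord (List.replicate (k + 1) 0 ++ List.replicate (k + 1) 1) k

/-- The word `q_{i,j} = 1^j (0^k 1^k)^{2i+j} (0^{k+1} 1^{k+1})^j 0^j`. -/
def qWord (k i j : ℕ) : List (Fin 2) :=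
  List.replicate j 1 ++
    repWord (List.replicate k 0 ++ List.replicate k 1) (2 * i + j) ++
    repWord (List.replicate (k + 1) 0 ++ List.replicate (k + 1) 1) j ++
    List.replicate j 0

lemma repWord_zero {α : Type*} (u : List α) : repWord u 0 = [] := rfl

lemma repWord_succ' {α : Type*} (u : List α) (m : ℕ) :
    repWord u (m + 1) = repWord u m ++ u := by
  simp [repWord, List.replicate_succ']

lemma repWord_succ {α : Type*} (u : List α) (m : ℕ) :
    repWord u (m + 1) = u ++ repWord u m := by
  simp [repWord, List.replicate_succ]

lemma repWord_add {α : Type*} (u : List α) (a b : ℕ) :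
    repWord u (a + b) = repWord u a ++ repWord u b := by
  rw [repWord, List.replicate_add, List.flatten_append]; rfl

lemma repWord_split {α : Type*} (u : List α) {n m q : ℕ} (h : n = m + 1 + q) :
    repWord u n = repWord u m ++ u ++ repWord u q := by
  subst h; rw [repWord_add, repWord_succ']

lemma length_repWord {α : Type*} (u : List α) (m : ℕ) :
    (repWord u m).length = m * u.length := by
  induction m with
  | zero => simp [repWord]
  | succ n ih => rw [repWord_succ']; simp [ih]; ring

lemma count_repWord {α : Type*} [DecidableEq α] (u : List α) (m : ℕ) (a : α) :
    (repWord u m).count a = m * u.count a := by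
  induction m with
  | zero => simp [repWord]
  | succ n ih => rw [repWord_succ']; simp [ih]; ring

/-- For `k ≥ 1`, `0 ≤ i ≤ k`, `0 ≤ j ≤ k−1` and `ℓ = ik + j(k+1)`, the word `q_{i,j}` is an
Abelian square of length `4ℓ` whose halves each contain exactly `ℓ` zeros and `ℓ` ones, and
`q_{i,j}` occurs in `w_k` at (1-based) position `6k² − 4ik − (2k+1)j + 1`, i.e., preceded by
a prefix of length `6k² − 4ik − (2k+1)j`. -/
theorem qWord_balanced_abelian_square_occurs (k i j : ℕ) (hk : 1 ≤ k)
    (hi : i ≤ k) (hj : j ≤ k - 1) :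
    (qWord k i j).length = 4 * (i * k + j * (k + 1)) ∧
    (∃ u v : List (Fin 2), qWord k i j = u ++ v ∧
      u.length = 2 * (i * k + j * (k + 1)) ∧ v.length = 2 * (i * k + j * (k + 1)) ∧
      u.count 0 = i * k + j * (k + 1) ∧ u.count 1 = i * k + j * (k + 1) ∧
      v.count 0 = i * k + j * (k + 1) ∧ v.count 1 = i * k + j * (k + 1)) ∧
    (∃ x y : List (Fin 2), wWord k = x ++ qWord k i j ++ y ∧
      x.length + 4 * i * k + (2 * k + 1) * j = 6 * k ^ 2) := by
  obtain ⟨p, hp⟩ : ∃ p, k = j + 1 + p := ⟨k - j - 1, by omega⟩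
  have h01 : ((0 : Fin 2) = 1) = False := by simp
  have h10 : ((1 : Fin 2) = 0) = False := by simp
  have hqlen : (qWord k i j).length = 4 * (i * k + j * (k + 1)) := by
    simp [qWord, length_repWord]; ring
  have hq0 : (qWord k i j).count 0 = 2 * (i * k + j * (k + 1)) := by
    simp [qWord, count_repWord, List.count_append, List.count_replicate, h01, h10]; ring
  have hq1 : (qWord k i j).count 1 = 2 * (i * k + j * (k + 1)) := by
    simp [qWord, count_repWord, List.count_append, List.count_replicate, h01, h10]; ring
  refine ⟨hqlen, ?_, ?_⟩
  · -- abelian-square decomposition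
    have key : ∃ v, qWord k i j = (List.replicate j 1 ++
        repWord (List.replicate k 0 ++ List.replicate k 1) (i + j) ++
        List.replicate j 0) ++ v := by
      rcases i with _ | i'
      · rcases j with _ | j'
        · exact ⟨[], by simp [qWord, repWord_zero]⟩
        · refine ⟨List.replicate (p + 2) 0 ++ (List.replicate (k + 1) 1 ++
            (repWord (List.replicate (k + 1) 0 ++ List.replicate (k + 1) 1) j' ++
            List.replicate (j' + 1) 0)), ?_⟩
          simp only [qWord, Nat.mul_zero, Nat.zero_add]
          rw [repWord_split (n := j' + 1) (m := 0) (q := j')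
              (List.replicate (k+1) (0:Fin 2) ++ List.replicate (k+1) 1) (by omega),
            show List.replicate (k+1) (0:Fin 2)
              = List.replicate (j'+1) 0 ++ List.replicate (p+2) 0 from by
                rw [← List.replicate_add]; congr 1; omega,
            repWord_zero]
          simp only [List.append_assoc, List.nil_append, List.append_nil]
      · refine ⟨List.replicate (p + 1) 0 ++ (List.replicate k 1 ++
          (repWord (List.replicate k 0 ++ List.replicate k 1) i' ++
          (repWord (List.replicate (k + 1) 0 ++ List.replicate (k + 1) 1) j ++
          List.replicate j 0))), ?_⟩
        simp only [qWord]
        rw [repWord_split (n := 2 * (i' + 1) + j) (m := i' + 1 + j) (q := i')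
            (List.replicate k (0:Fin 2) ++ List.replicate k 1) (by ring)]
        rw [show List.replicate k (0:Fin 2)
            = List.replicate j 0 ++ List.replicate (p+1) 0 from by
              rw [← List.replicate_add]; congr 1; omega]
        simp only [List.append_assoc]
    obtain ⟨v, hv⟩ := key
    have hulen : (List.replicate j (1:Fin 2) ++
        repWord (List.replicate k 0 ++ List.replicate k 1) (i + j) ++
        List.replicate j 0).length = 2 * (i * k + j * (k + 1)) := by
      simp [length_repWord]; ring
    have hu0 : (List.replicate j (1:Fin 2) ++
        repWord (List.replicate k 0 ++ List.replicate k 1) (i + j) ++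
        List.replicate j 0).count 0 = i * k + j * (k + 1) := by
      simp [count_repWord, List.count_append, List.count_replicate, h01, h10]; ring
    have hu1 : (List.replicate j (1:Fin 2) ++
        repWord (List.replicate k 0 ++ List.replicate k 1) (i + j) ++
        List.replicate j 0).count 1 = i * k + j * (k + 1) := by
      simp [count_repWord, List.count_append, List.count_replicate, h01, h10]; ring
    obtain ⟨L, hL⟩ : ∃ L, L = i * k + j * (k + 1) := ⟨_, rfl⟩
    rw [← hL] at hqlen hq0 hq1 hulen hu0 hu1 ⊢
    have e1 : (qWord k i j).length = _ := congrArg List.length hv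
    rw [List.length_append] at e1
    have e2 : (qWord k i j).count 0 = _ := congrArg (List.count 0) hv
    rw [List.count_append] at e2
    have e3 : (qWord k i j).count 1 = _ := congrArg (List.count 1) hv
    rw [List.count_append] at e3
    exact ⟨_, v, hv, hulen, by omega, hu0, hu1, by omega, by omega⟩
  · -- occurrence in wWord
    obtain ⟨m₂, hm₂⟩ : ∃ m, 3 * k = m + 1 + (2 * i + j) := ⟨3*k - 1 - 2*i - j, by omega⟩
    refine ⟨repWord (List.replicate k 0 ++ List.replicate k 1) m₂ ++
        (List.replicate k 0 ++ List.replicate (p + 1) 1),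
      List.replicate (p + 2) 0 ++ (List.replicate (k + 1) 1 ++
        repWord (List.replicate (k + 1) 0 ++ List.replicate (k + 1) 1) p), ?_, ?_⟩
    · simp only [wWord, qWord]
      rw [repWord_split (List.replicate k (0:Fin 2) ++ List.replicate k 1) hm₂,
        repWord_split (List.replicate (k+1) (0:Fin 2) ++ List.replicate (k+1) 1) hp,
        show List.replicate k (1:Fin 2)
          = List.replicate (p+1) 1 ++ List.replicate j 1 from by
            rw [← List.replicate_add]; congr 1; omega,
        show List.replicate (k+1) (0:Fin 2)
          = List.replicate j 0 ++ List.replicate (p+2) 0 from by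
            rw [← List.replicate_add]; congr 1; omega]
      simp only [List.append_assoc]
    · simp only [List.length_append, length_repWord, List.length_replicate]
      have h6 : 6 * k ^ 2 = 2 * k * (m₂ + 1 + (2 * i + j)) := by rw [← hm₂]; ring
      rw [h6]
      zify
      nlinarith [hp, hm₂]
end

section
/- Let w be a word, k a positive integer, and i < j indices such that both fragments w[i..i+2k−1] and w[j..j+2k−1] are Abelian squares. If the fragment w[i+k..j+k−1] is uniform (all its letters are equal), then P(w[i..i+2k−1]) = P(w[j..j+2k−1]). -/
/-- A word is an Abelian square if it is a concatenation `u ++ v` of two words of the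
same length with equal Parikh vectors (i.e., equal multisets of letters). -/
def IsAbelianSquare {α : Type*} (w : List α) : Prop :=
  ∃ u v : List α, w = u ++ v ∧ u.length = v.length ∧ (u : Multiset α) = (v : Multiset α)

/-- The fragment of `w` of length `len` starting at (0-based) position `i`. -/
def frag {α : Type*} (w : List α) (i len : ℕ) : List α :=
  (w.drop i).take len

lemma frag_length {α : Type*} (w : List α) (p q : ℕ) (h : p + q ≤ w.length) :
    (frag w p q).length = q := by
  simp [frag]; omega

lemma frag_append {α : Type*} (w : List α) (p m n : ℕ) :
    frag w p (m + n) = frag w p m ++ frag w (p + m) n := by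
  simp [frag, List.take_add, List.drop_drop, Nat.add_comm]

lemma frag_getElem {α : Type*} (w : List α) (p q t : ℕ) (ht : t < q) (hw : p + t < w.length) :
    (frag w p q)[t]'(by simp [frag]; omega) = w[p + t] := by
  simp [frag]

lemma frag_eq_replicate {α : Type*} (w : List α) (a : α) (L R p q : ℕ)
    (hall : ∀ b ∈ frag w L R, b = a) (h1 : L ≤ p) (h2 : p + q ≤ L + R)
    (h3 : L + R ≤ w.length) :
    frag w p q = List.replicate q a := by
  apply List.ext_getElem
  · rw [frag_length w p q (by omega)]; simp
  intro t h h'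
  have ht : t < q := by rwa [frag_length w p q (by omega)] at h
  have hw : p + t < w.length := by omega
  rw [List.getElem_replicate, frag_getElem w p q t ht hw]
  have hmem : w[p + t] ∈ frag w L R := by
    have h5 : p + t - L < R := by omega
    have h6 : L + (p + t - L) < w.length := by omega
    have := frag_getElem w L R (p + t - L) h5 h6
    simp only [show L + (p + t - L) = p + t from by omega] at this
    rw [← this]
    exact List.getElem_mem _
  exact hall _ hmem

lemma abelian_halves {α : Type*} {X Y : List α} (h : IsAbelianSquare (X ++ Y))
    (hXY : X.length = Y.length) : (X : Multiset α) = (Y : Multiset α) := by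
  obtain ⟨u, v, he, hl, hm⟩ := h
  have hlen : X.length = u.length := by
    have := congrArg List.length he
    simp at this; omega
  obtain ⟨h1, h2⟩ := List.append_inj he.symm hlen.symm
  subst h1; subst h2; exact hm

/-- Let `w` be a word, `k` a positive integer and `i < j` positions such that the fragments
of length `2k` starting at `i` and at `j` lie inside `w` and are Abelian squares.  If the
fragment of length `j − i` starting at position `i + k` is uniform (all its letters equal),
then the two Abelian squares have the same Parikh vector. -/
theorem abelian_squares_separated_by_uniform_fragment {α : Type*} (w : List α) (k i j : ℕ)
    (hk : 0 < k) (hij : i < j) (hbound : j + 2 * k ≤ w.length)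
    (hsq₁ : IsAbelianSquare (frag w i (2 * k)))
    (hsq₂ : IsAbelianSquare (frag w j (2 * k)))
    (huniform : ∃ a : α, ∀ b ∈ frag w (i + k) (j - i), b = a) :
    (frag w i (2 * k) : Multiset α) = (frag w j (2 * k) : Multiset α) := by
  obtain ⟨a, ha⟩ := huniform
  have hLR : (i + k) + (j - i) = j + k := by omega
  have e1 : frag w i (2 * k) = frag w i k ++ frag w (i + k) k := by
    rw [show 2 * k = k + k from by ring, frag_append]
  have e2 : frag w j (2 * k) = frag w j k ++ frag w (j + k) k := by
    rw [show 2 * k = k + k from by ring, frag_append]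
  by_cases hcase : k ≤ j - i
  · -- far case: both middle halves are uniform
    have hm1 : (frag w i k : Multiset α) = (frag w (i + k) k : Multiset α) := by
      apply abelian_halves (e1 ▸ hsq₁)
      rw [frag_length w i k (by omega), frag_length w (i + k) k (by omega)]
    have hm2 : (frag w j k : Multiset α) = (frag w (j + k) k : Multiset α) := by
      apply abelian_halves (e2 ▸ hsq₂)
      rw [frag_length w j k (by omega), frag_length w (j + k) k (by omega)]
    have r1 : frag w (i + k) k = List.replicate k a :=
      frag_eq_replicate w a (i + k) (j - i) (i + k) k ha (le_refl _) (by omega) (by omega)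
    have r2 : frag w j k = List.replicate k a :=
      frag_eq_replicate w a (i + k) (j - i) j k ha (by omega) (by omega) (by omega)
    rw [e1, e2, r1, r2]
    rw [r1] at hm1
    rw [r2] at hm2
    show (frag w i k : Multiset α) + (List.replicate k a : Multiset α)
      = (List.replicate k a : Multiset α) + (frag w (j + k) k : Multiset α)
    rw [hm1, hm2]
  · -- close case
    set d := j - i with hd
    have hdk : d < k := by omega
    set c := k - d with hc
    have ediA : frag w i k = frag w i d ++ frag w (i + d) c := by
      rw [show k = d + c from by omega, frag_append]
    have ediB : frag w (i + k) k = frag w (i + k) d ++ frag w (i + k + d) c := by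
      rw [show k = d + c from by omega, frag_append]
    have edjA : frag w j k = frag w (i + d) c ++ frag w (i + k) d := by
      have h := frag_append w (i + d) c d
      rw [show c + d = k from by omega, show i + d + c = i + k from by omega] at h
      rw [show j = i + d from by omega]
      exact h
    have edjB : frag w (j + k) k = frag w (i + k + d) c ++ frag w (i + 2 * k) d := by
      have h := frag_append w (i + k + d) c d
      rw [show c + d = k from by omega, show i + k + d + c = i + 2 * k from by omega] at h
      rw [show j + k = i + k + d from by omega]
      exact h
    set X : Multiset α := (frag w i d : Multiset α) with hX
    set T : Multiset α := (frag w (i + d) c : Multiset α) with hT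
    set D : Multiset α := (frag w (i + k) d : Multiset α) with hD
    set S : Multiset α := (frag w (i + k + d) c : Multiset α) with hS
    set Y : Multiset α := (frag w (i + 2 * k) d : Multiset α) with hY
    have hm1 : X + T = D + S := by
      have := abelian_halves (X := frag w i d ++ frag w (i + d) c)
        (Y := frag w (i + k) d ++ frag w (i + k + d) c)
        (by rw [← ediA, ← ediB, ← e1]; exact hsq₁)
        (by simp only [List.length_append]
            rw [frag_length w i d (by omega), frag_length w (i + d) c (by omega),
              frag_length w (i + k) d (by omega), frag_length w (i + k + d) c (by omega)])
      exact this
    have hm2 : T + D = S + Y := by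
      have := abelian_halves (X := frag w (i + d) c ++ frag w (i + k) d)
        (Y := frag w (i + k + d) c ++ frag w (i + 2 * k) d)
        (by rw [← edjA, ← edjB, ← e2]; exact hsq₂)
        (by simp only [List.length_append]
            rw [frag_length w (i + d) c (by omega), frag_length w (i + k) d (by omega),
              frag_length w (i + k + d) c (by omega), frag_length w (i + 2 * k) d (by omega)])
      exact this
    have rD : D = Multiset.replicate d a := by
      rw [hD, frag_eq_replicate w a (i + k) (j - i) (i + k) d ha (le_refl _) (by omega) (by omega)]
      rfl
    have hXY : X + Y = Multiset.replicate d a + Multiset.replicate d a := by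
      have h : (X + Y) + (T + S) = (Multiset.replicate d a + Multiset.replicate d a) + (T + S) := by
        calc (X + Y) + (T + S) = (X + T) + (S + Y) := by abel
          _ = (D + S) + (T + D) := by rw [hm1, ← hm2]
          _ = (Multiset.replicate d a + Multiset.replicate d a) + (T + S) := by rw [rD]; abel
      exact add_right_cancel h
    rw [← Multiset.replicate_add] at hXY
    have hXa : X = Multiset.replicate d a := by
      rw [Multiset.eq_replicate]
      constructor
      · rw [hX, Multiset.coe_card, frag_length w i d (by omega)]
      · intro b hb
        exact Multiset.eq_of_mem_replicate (hXY ▸ Multiset.mem_add.2 (Or.inl hb))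
    have hYa : Y = Multiset.replicate d a := by
      rw [Multiset.eq_replicate]
      constructor
      · rw [hY, Multiset.coe_card, frag_length w (i + 2 * k) d (by omega)]
      · intro b hb
        exact Multiset.eq_of_mem_replicate (hXY ▸ Multiset.mem_add.2 (Or.inr hb))
    rw [e1, e2, ediA, ediB, edjA, edjB]
    show (X + T) + (D + S) = (T + D) + (S + Y)
    rw [hXa, hYa, rD]
    abel
end

section
/- Let w be a word with exactly m blocks. Then for every fixed k ≥ 1, the number of distinct Parikh vectors P(u) arising from fragments of w of the form uv with |u| = |v| = k and P(u) = P(v) is at most m. That is, w contains at most m Abelian-nonequivalent Abelian squares of any fixed length 2k. -/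
/-!
Pick for every Parikh vector `P` of the set one occurrence `uv` of an Abelian square with
`P(u) = P`, starting at position `i`, and send `P` to the number of blocks of the suffix of `w`
beginning with `v`; this number lies in `{1, …, m}`. If two occurrences starting at `i ≤ j = i + d`
receive the same number, then the `d` letters following `u` are all one letter `a`. Counting any
letter `c` in the `d` letters starting at `i`, `i + k` and `i + 2k`, the two square conditions
force the halves of the two squares to have the same number of `c`s, so the map is injective.
-/

/-- The number of blocks (maximal uniform fragments) of a word, i.e., the length of its
run-length encoding: obtained by collapsing adjacent equal letters. -/
def numBlocks {α : Type*} [DecidableEq α] (w : List α) : ℕ :=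
  (w.destutter (· ≠ ·)).length

section Blocks

variable {α : Type*} [DecidableEq α]

theorem numBlocks_pos_iff {l : List α} : 0 < numBlocks l ↔ l ≠ [] := by
  simp [numBlocks, List.length_pos_iff, List.destutter_eq_nil]

theorem numBlocks_le_of_sublist {l₁ l₂ : List α} (h : l₁.Sublist l₂) :
    numBlocks l₁ ≤ numBlocks l₂ :=
  List.IsChain.length_le_length_destutter_ne ((List.destutter_sublist _ _).trans h)
    (List.isChain_destutter _ _)

theorem numBlocks_cons_cons_of_ne {a b : α} (h : a ≠ b) (l : List α) :
    numBlocks (a :: b :: l) = numBlocks (b :: l) + 1 := by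
  simp [numBlocks, List.destutter_cons', h]

theorem numBlocks_drop_mem_Icc {w : List α} {p : ℕ} (hp : p < w.length) :
    numBlocks (w.drop p) ∈ Finset.Icc 1 (numBlocks w) := by
  have hpos := numBlocks_pos_iff.mpr (List.ne_nil_of_length_pos (l := w.drop p) (by simpa))
  have hle := numBlocks_le_of_sublist (List.drop_sublist p w)
  exact Finset.mem_Icc.mpr ⟨hpos, hle⟩

theorem eq_of_mem_take_of_numBlocks_drop_eq {a : α} {l : List α} {d : ℕ}
    (h : numBlocks ((a :: l).drop d) = numBlocks (a :: l)) : ∀ x ∈ (a :: l).take d, x = a := by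
  induction d generalizing a l with
  | zero => simp
  | succ d ih =>
    rcases l with _ | ⟨b, l⟩
    · simp
    have hle : numBlocks ((b :: l).drop d) ≤ numBlocks (b :: l) :=
      numBlocks_le_of_sublist (List.drop_sublist _ _)
    have hab : a = b := by
      by_contra hab
      have := numBlocks_cons_cons_of_ne hab l
      simp only [List.drop_succ_cons] at h
      omega
    subst hab
    have hcons : numBlocks (a :: l) ≤ numBlocks (a :: a :: l) :=
      List.length_destutter_ne_le_length_destutter_cons
    simp only [List.drop_succ_cons] at h
    simpa [List.take_succ_cons] using ih (a := a) (l := l) (by omega)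

end Blocks

section AbelianSquares

variable {α : Type*}

def IsAbelianSquareAt (w : List α) (k i : ℕ) : Prop :=
  i + k + k ≤ w.length ∧ ((w.drop i).take k).Perm ((w.drop (i + k)).take k)

theorem exists_isAbelianSquareAt_of_exists_append {w : List α} {k : ℕ} {P : Multiset α}
    (h : ∃ x u v y : List α, w = x ++ u ++ v ++ y ∧ u.length = k ∧ v.length = k ∧
      (u : Multiset α) = (v : Multiset α) ∧ (u : Multiset α) = P) :
    ∃ i, IsAbelianSquareAt w k i ∧ ((w.drop i).take k : Multiset α) = P := by
  obtain ⟨x, u, v, y, rfl, rfl, hv, huv, rfl⟩ := h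
  have hdrop : (x ++ u ++ v ++ y).drop (x.length + u.length) = v ++ y := by
    simp [List.drop_append]
  refine ⟨x.length, ⟨by simp [hv]; omega, ?_⟩, by simp⟩
  rw [hdrop, List.take_left' hv]
  simpa using Multiset.coe_eq_coe.mp huv

variable [DecidableEq α]

theorem count_take_add_drop (w : List α) (c : α) (p a b : ℕ) :
    ((w.drop p).take (a + b)).count c
      = ((w.drop p).take a).count c + ((w.drop (p + a)).take b).count c := by
  rw [List.take_add, List.count_append, List.drop_drop]

/-- Writing `L`, `M`, `R` for the number of `c`s among the `d` letters starting at `i`, `i + k`,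
`i + 2k`, the two squares give `L + R = 2M`; since `L, R ≤ d`, `M ∈ {0, d}` forces `L = M`. -/
theorem count_take_drop_eq_of_abelian_squares (w : List α) (c : α) {i k d : ℕ}
    (hi : ((w.drop i).take k).count c = ((w.drop (i + k)).take k).count c)
    (hj : ((w.drop (i + d)).take k).count c = ((w.drop (i + d + k)).take k).count c)
    (hmid : ((w.drop (i + k)).take d).count c = 0 ∨ ((w.drop (i + k)).take d).count c = d) :
    ((w.drop i).take k).count c = ((w.drop (i + d)).take k).count c := by
  have hleft := count_take_add_drop w c i d k
  have hleft' := count_take_add_drop w c i k d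
  have hright := count_take_add_drop w c (i + k) d k
  have hright' := count_take_add_drop w c (i + k) k d
  have hL : ((w.drop i).take d).count c ≤ d :=
    List.count_le_length.trans (List.length_take_le _ _)
  have hR : ((w.drop (i + k + k)).take d).count c ≤ d :=
    List.count_le_length.trans (List.length_take_le _ _)
  rw [Nat.add_comm d k] at hleft hright
  rw [Nat.add_right_comm] at hj
  omega

theorem perm_take_drop_of_abelian_squares (w : List α) {i k d : ℕ} {a : α}
    (hi : ((w.drop i).take k).Perm ((w.drop (i + k)).take k))
    (hj : ((w.drop (i + d)).take k).Perm ((w.drop (i + d + k)).take k))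
    (hmid : (w.drop (i + k)).take d = List.replicate d a) :
    ((w.drop i).take k).Perm ((w.drop (i + d)).take k) := by
  rw [List.perm_iff_count] at hi hj ⊢
  intro c
  refine count_take_drop_eq_of_abelian_squares w c (hi c) (hj c) ?_
  rw [hmid, List.count_replicate]
  split_ifs <;> simp

theorem perm_of_isAbelianSquareAt_of_numBlocks_eq {w : List α} {k i j : ℕ} (hk : 0 < k)
    (hij : i ≤ j) (hi : IsAbelianSquareAt w k i) (hj : IsAbelianSquareAt w k j)
    (h : numBlocks (w.drop (j + k)) = numBlocks (w.drop (i + k))) :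
    ((w.drop i).take k).Perm ((w.drop j).take k) := by
  obtain ⟨d, rfl⟩ := Nat.exists_eq_add_of_le hij
  obtain ⟨a, l, hal⟩ : ∃ a l, w.drop (i + k) = a :: l :=
    ⟨_, _, List.drop_eq_getElem_cons (by have := hi.1; omega)⟩
  have hmid : (w.drop (i + k)).take d = List.replicate d a := by
    rw [List.eq_replicate_iff]
    refine ⟨by have := hj.1; simp; omega, ?_⟩
    rw [hal]
    apply eq_of_mem_take_of_numBlocks_drop_eq
    rw [← hal, List.drop_drop, ← h, Nat.add_right_comm]
  exact perm_take_drop_of_abelian_squares w hi.2 hj.2 hmid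

end AbelianSquares

/-- A word `w` with exactly `m` blocks contains, for every fixed `k ≥ 1`, at most `m`
distinct Parikh vectors `P(u)` arising from fragments of `w` of the form `u ++ v` with
`|u| = |v| = k` and `P(u) = P(v)`; that is, `w` contains at most `m` Abelian-nonequivalent
Abelian squares of any fixed length `2k`. -/
theorem abelian_nonequivalent_squares_fixed_length_le_blocks {α : Type*} [DecidableEq α]
    (w : List α) (m k : ℕ) (hm : numBlocks w = m) (hk : 1 ≤ k) :
    {P : Multiset α | ∃ x u v y : List α, w = x ++ u ++ v ++ y ∧
        u.length = k ∧ v.length = k ∧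
        (u : Multiset α) = (v : Multiset α) ∧ (u : Multiset α) = P}.ncard ≤ m := by
  choose! start hsq hP using fun P ↦
    exists_isAbelianSquareAt_of_exists_append (w := w) (k := k) (P := P)
  refine (Set.ncard_le_ncard_of_injOn (fun P ↦ numBlocks (w.drop (start P + k))) ?_ ?_
    (Finset.finite_toSet (Finset.Icc 1 m))).trans (by simp)
  · intro P hPS
    rw [Finset.mem_coe, ← hm]
    exact numBlocks_drop_mem_Icc (by have := (hsq P hPS).1; omega)
  · intro P hPS Q hQS hPQ
    rw [← hP P hPS, ← hP Q hQS, Multiset.coe_eq_coe]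
    rcases le_total (start P) (start Q) with h | h
    · exact perm_of_isAbelianSquareAt_of_numBlocks_eq hk h (hsq P hPS) (hsq Q hQS) hPQ.symm
    · exact (perm_of_isAbelianSquareAt_of_numBlocks_eq hk h (hsq Q hQS) (hsq P hPS) hPQ).symm
end

section
/- Let w be a word of length n with exactly m blocks. Then the total number of Abelian-nonequivalent Abelian squares occurring as fragments of w is at most nm/2. -/
section Blocks

variable {α : Type*} [DecidableEq α] {l t : List α}

theorem List.getLast?_destutter'_ne (l : List α) (a : α) :
    (l.destutter' (· ≠ ·) a).getLast? = (a :: l).getLast? := by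
  induction l generalizing a with
  | nil => rfl
  | cons b l ih =>
    by_cases hab : a = b
    · subst hab
      rw [List.destutter'_cons_neg _ (not_not.2 rfl), ih, List.getLast?_cons_cons]
    · rw [List.destutter'_cons_pos _ hab, List.getLast?_cons, ih, List.getLast?_cons_cons,
        List.getLast?_cons, Option.getD_some]

theorem List.getLast?_destutter_ne (l : List α) :
    (l.destutter (· ≠ ·)).getLast? = l.getLast? := by
  cases l with
  | nil => rfl
  | cons a l => exact List.getLast?_destutter'_ne l a

theorem numBlocks_pos (h : l ≠ []) : 0 < numBlocks l :=
  List.length_pos_iff.2 (mt (List.destutter_eq_nil _).1 h)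

theorem numBlocks_le_of_sublist_s7 (h : l.Sublist t) : numBlocks l ≤ numBlocks t :=
  (List.isChain_destutter _ l).length_le_length_destutter ((List.destutter_sublist _ l).trans h)

theorem numBlocks_lt_append_of_mem {b : α} (hb : b ∈ t) (hne : l.getLast? ≠ some b) :
    numBlocks l < numBlocks (l ++ t) := by
  have hchain : (l.destutter (· ≠ ·) ++ [b]).IsChain (· ≠ ·) := by
    refine List.isChain_append.2 ⟨List.isChain_destutter _ l, List.isChain_singleton b, ?_⟩
    rintro x hx y ⟨⟩ rfl
    rw [List.getLast?_destutter_ne] at hx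
    exact hne (hx ▸ rfl)
  have hsub : (l.destutter (· ≠ ·) ++ [b]).Sublist (l ++ t) :=
    (List.destutter_sublist _ l).append (List.singleton_sublist.2 hb)
  simpa [numBlocks] using hchain.length_le_length_destutter hsub

end Blocks

namespace AbelianSquares

variable {α : Type*}

def parikhWindow (w : List α) (i k : ℕ) : Multiset α :=
  ((w.drop i).take k : List α)

def IsAbelianSquareAt (w : List α) (i k : ℕ) (P : Multiset α) : Prop :=
  i + 2 * k ≤ w.length ∧ parikhWindow w i k = P ∧ parikhWindow w (i + k) k = P

def abelianSquareParikhs (w : List α) (k : ℕ) : Set (Multiset α) :=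
  {P | ∃ i, IsAbelianSquareAt w i k P}

theorem parikhWindow_add (w : List α) (i k l : ℕ) :
    parikhWindow w i (k + l) = parikhWindow w i k + parikhWindow w (i + k) l := by
  simp [parikhWindow, List.take_add, List.drop_drop]

theorem parikhWindow_add_comm (w : List α) (i k l : ℕ) :
    parikhWindow w i k + parikhWindow w (i + k) l =
      parikhWindow w i l + parikhWindow w (i + l) k := by
  rw [← parikhWindow_add, ← parikhWindow_add, add_comm]

theorem abelianSquareParikhs_finite (w : List α) (k : ℕ) : (abelianSquareParikhs w k).Finite :=
  ((Set.finite_Iic w.length).image fun i => parikhWindow w i k).subset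
    fun _ ⟨i, hi⟩ => ⟨i, by simp only [Set.mem_Iic]; have := hi.1; omega, hi.2.1⟩

section Windows

variable {w : List α} {i j k l : ℕ}

theorem parikhWindow_one (h : j < w.length) : parikhWindow w j 1 = {w[j]} := by
  simp [parikhWindow, List.take_one, List.head?_drop, h]

theorem getElem_mem_parikhWindow (hij : i ≤ j) (hjl : j < i + l) (hj : j < w.length) :
    w[j] ∈ parikhWindow w i l := by
  obtain ⟨d, rfl⟩ := Nat.exists_eq_add_of_le hij
  have : parikhWindow w (i + d) 1 ≤ parikhWindow w i l := by
    rw [show l = d + 1 + (l - (d + 1)) by omega, parikhWindow_add, parikhWindow_add]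
    exact (Multiset.le_add_left _ _).trans (Multiset.le_add_right _ _)
  exact Multiset.mem_of_le this (by simp [parikhWindow_one hj])

theorem parikhWindow_eq_succ (hj : j + k < w.length) (h : w[j] = w[j + k]) :
    parikhWindow w j k = parikhWindow w (j + 1) k := by
  have := parikhWindow_add_comm w j k 1
  rw [parikhWindow_one hj, parikhWindow_one (by omega), h, add_comm {_}] at this
  exact add_right_cancel this

end Windows

variable {w : List α}

theorem IsAbelianSquareAt.of_eq_append {x u v y : List α} (hw : w = x ++ u ++ v ++ y)
    (hlen : u.length = v.length) (huv : (u : Multiset α) = v) :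
    IsAbelianSquareAt w x.length u.length u := by
  subst hw
  refine ⟨by simp; omega, by simp [parikhWindow], ?_⟩
  rw [parikhWindow, List.append_assoc, show x ++ u ++ (v ++ y) = (x ++ u) ++ (v ++ y) by simp,
    show x.length + u.length = (x ++ u).length by simp, List.drop_left, hlen, List.take_left, huv]

variable [DecidableEq α] {i k l : ℕ} {P P' : Multiset α}

theorem parikhWindow_add_parikhWindow_of_isAbelianSquareAt (h : IsAbelianSquareAt w i k P)
    (h' : IsAbelianSquareAt w (i + l) k P') :
    parikhWindow w i l + parikhWindow w (i + 2 * k) l =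
      parikhWindow w (i + k) l + parikhWindow w (i + k) l := by
  have left := parikhWindow_add_comm w i k l
  rw [h.2.1, h'.2.1] at left
  have right := parikhWindow_add_comm w (i + k) k l
  rw [h.2.2, add_right_comm i k l, h'.2.2, add_assoc i k k, ← two_mul] at right
  -- `Multiset α` is cancellative but not a group: subtract multiplicities letter by letter.
  ext a
  have hleft := congrArg (Multiset.count a) left
  have hright := congrArg (Multiset.count a) right
  simp only [Multiset.count_add] at hleft hright ⊢
  omega

theorem IsAbelianSquareAt.shift_left {d : ℕ} {a : α} (h : IsAbelianSquareAt w i k P)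
    (h' : IsAbelianSquareAt w (i + d + 1) k P')
    (hrun : ∀ b ∈ parikhWindow w (i + k) (d + 1), b = a) :
    IsAbelianSquareAt w (i + d) k P' := by
  have hlen := h'.1
  have hflanks := parikhWindow_add_parikhWindow_of_isAbelianSquareAt (l := d + 1) h
    (by rwa [← add_assoc])
  have hflank : ∀ b ∈ parikhWindow w i (d + 1) + parikhWindow w (i + 2 * k) (d + 1), b = a := by
    intro b hb
    rw [hflanks] at hb
    exact (Multiset.mem_add.1 hb).elim (hrun b) (hrun b)
  have hleft : w[i + d] = a := hflank _ <|
    Multiset.mem_add.2 <| .inl <| getElem_mem_parikhWindow (by omega) (by omega) _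
  have hmid : w[i + d + k] = a := hrun _ (getElem_mem_parikhWindow (by omega) (by omega) _)
  have hright : w[i + d + k + k] = a := hflank _ <|
    Multiset.mem_add.2 <| .inr <| getElem_mem_parikhWindow (by omega) (by omega) _
  refine ⟨by omega, ?_, ?_⟩
  · rw [parikhWindow_eq_succ (by omega) (hleft.trans hmid.symm), h'.2.1]
  · rw [parikhWindow_eq_succ (by omega) (hmid.trans hright.symm), ← h'.2.2]
    congr 1
    omega

theorem numBlocks_take_ne_of_isAbelianSquareAt {i' : ℕ} (hk : 0 < k)
    (h : IsAbelianSquareAt w i k P) (h' : IsAbelianSquareAt w i' k P') (hlt : i < i')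
    (hmin : ∀ j < i', ¬IsAbelianSquareAt w j k P') :
    numBlocks (w.take (i + k)) ≠ numBlocks (w.take (i' + k)) := by
  obtain ⟨d, rfl⟩ := Nat.exists_eq_add_of_lt hlt
  intro hblocks
  have hsplit : w.take (i + d + 1 + k) = w.take (i + k) ++ (w.drop (i + k)).take (d + 1) := by
    rw [show i + d + 1 + k = i + k + (d + 1) by omega, List.take_add]
  have hne : w.take (i + k) ≠ [] := List.ne_nil_of_length_pos (by have := h.1; simp; omega)
  obtain ⟨a, ha⟩ := Option.isSome_iff_exists.1 (List.getLast?_isSome.2 hne)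
  have hrun : ∀ b ∈ parikhWindow w (i + k) (d + 1), b = a := by
    intro b hb
    by_contra hba
    refine (numBlocks_lt_append_of_mem (Multiset.mem_coe.1 hb) ?_).ne (hsplit ▸ hblocks)
    rw [ha]
    exact fun hab => hba (Option.some_injective _ hab).symm
  exact hmin _ (by omega) (h.shift_left h' hrun)

theorem ncard_abelianSquareParikhs_le (hk : 0 < k) :
    (abelianSquareParikhs w k).ncard ≤ numBlocks w := by
  set first : Multiset α → ℕ := fun P => sInf {i | IsAbelianSquareAt w i k P}
  have hfirst : ∀ P ∈ abelianSquareParikhs w k, IsAbelianSquareAt w (first P) k P :=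
    fun P hP => Nat.sInf_mem hP
  have hmin : ∀ P, ∀ j < first P, ¬IsAbelianSquareAt w j k P :=
    fun P j hj => Nat.notMem_of_lt_sInf hj
  calc (abelianSquareParikhs w k).ncard ≤ (Set.Icc 1 (numBlocks w)).ncard := by
        refine Set.ncard_le_ncard_of_injOn (fun P => numBlocks (w.take (first P + k))) ?_ ?_
        · intro P hP
          have := (hfirst P hP).1
          exact ⟨numBlocks_pos (List.ne_nil_of_length_pos (by simp; omega)),
            numBlocks_le_of_sublist_s7 (List.take_sublist _ _)⟩
        · intro P hP P' hP' hblocks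
          by_contra hne
          have hi : first P ≠ first P' := fun hi =>
            hne ((hfirst P hP).2.1.symm.trans (hi ▸ (hfirst P' hP').2.1))
          rcases hi.lt_or_gt with hlt | hlt
          · exact numBlocks_take_ne_of_isAbelianSquareAt hk (hfirst P hP) (hfirst P' hP') hlt
              (hmin P') hblocks
          · exact numBlocks_take_ne_of_isAbelianSquareAt hk (hfirst P' hP') (hfirst P hP) hlt
              (hmin P) hblocks.symm
    _ = numBlocks w := by simp

theorem ncard_setOf_abelianSquare_le (w : List α) :
    {P : Multiset α | ∃ x u v y : List α, w = x ++ u ++ v ++ y ∧ u.length = v.length ∧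
      1 ≤ u.length ∧ (u : Multiset α) = v ∧ (u : Multiset α) = P}.ncard ≤
      w.length / 2 * numBlocks w := by
  calc _ ≤ (⋃ k ∈ Finset.Icc 1 (w.length / 2), abelianSquareParikhs w k).ncard := by
        refine Set.ncard_le_ncard ?_ <| (Finset.finite_toSet _).biUnion fun k _ =>
          abelianSquareParikhs_finite w k
        rintro P ⟨x, u, v, y, hw, hlen, hu, huv, rfl⟩
        have hsq := IsAbelianSquareAt.of_eq_append hw hlen huv
        have hk : u.length ∈ Finset.Icc 1 (w.length / 2) :=
          Finset.mem_Icc.2 ⟨hu, by have := hsq.1; omega⟩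
        exact Set.mem_iUnion₂.2 ⟨u.length, hk, _, hsq⟩
    _ ≤ ∑ k ∈ Finset.Icc 1 (w.length / 2), (abelianSquareParikhs w k).ncard :=
        Finset.set_ncard_biUnion_le _ _
    _ ≤ ∑ k ∈ Finset.Icc 1 (w.length / 2), numBlocks w :=
        Finset.sum_le_sum fun k hk => ncard_abelianSquareParikhs_le (Finset.mem_Icc.1 hk).1
    _ = w.length / 2 * numBlocks w := by simp

end AbelianSquares

open AbelianSquares in
/-- A word `w` of length `n` with exactly `m` blocks contains at most `nm/2`
Abelian-nonequivalent Abelian squares, counted as the number of distinct Parikh vectors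
`P(u)` arising from fragments of `w` of the form `u ++ v` with `|u| = |v| ≥ 1` and
`P(u) = P(v)`. -/
theorem abelian_nonequivalent_squares_le_blocks {α : Type*} [DecidableEq α]
    (w : List α) (n m : ℕ) (hn : w.length = n) (hm : numBlocks w = m) :
    ({P : Multiset α | ∃ x u v y : List α, w = x ++ u ++ v ++ y ∧
        u.length = v.length ∧ 1 ≤ u.length ∧
        (u : Multiset α) = (v : Multiset α) ∧ (u : Multiset α) = P}.ncard : ℝ) ≤
      (n : ℝ) * (m : ℝ) / 2 := by
  subst hn hm
  calc _ ≤ ((w.length / 2 : ℕ) : ℝ) * numBlocks w := by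
        exact_mod_cast ncard_setOf_abelianSquare_le w
    _ ≤ (w.length : ℝ) / 2 * numBlocks w := by gcongr; exact Nat.cast_div_le
    _ = (w.length : ℝ) * numBlocks w / 2 := by ring
end

section
/- Let w be a word of length n over an alphabet Σ with |Σ| = σ. Then the number of pairs (i, j) such that the fragment w[i..j] is an imbalanced parameterized square is at most (σ choose 2)·n. In particular, at most (σ choose 2) prefixes of w are imbalanced parameterized squares. -/
/-!
If `uv` is an imbalanced parameterized square with `v = u.map f`, some letter `b = f a` occurs
in `v` but not in `u`. As `f` is injective on the letters of `u`, the first `b` of `v` sits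
exactly `|u|` positions after the first `a` of `u`, so in any word with prefix `uv` the half
length `|u|` is the gap between the first occurrences of `a` and `b`. Hence imbalanced square
prefixes are determined by pairs of letters ordered by first occurrence, of which there are at
most `σ choose 2`; summing over the `n` starting positions bounds all fragments.
-/

/-- Words `u` and `v` are parameterized-equivalent if `|u| = |v|` and there is a bijection
`f : Alph(u) → Alph(v)` with `v[i] = f(u[i])` for all `i`; equivalently, `v = u.map f` for
some function `f` injective on the set of letters of `u` (then `f` automatically maps
`Alph(u)` bijectively onto `Alph(v)`). -/
def ParamEquiv {α : Type*} (u v : List α) : Prop :=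
  ∃ f : α → α, Set.InjOn f {a | a ∈ u} ∧ v = u.map f

section

open List

variable {α : Type*}

theorem List.idxOf_map_of_injOn {β : Type*} [DecidableEq α] [DecidableEq β] {f : α → β}
    {u : List α} (hf : Set.InjOn f {x | x ∈ u}) {a : α} (ha : a ∈ u) :
    (u.map f).idxOf (f a) = u.idxOf a := by
  induction u with
  | nil => simp at ha
  | cons c u ih =>
    by_cases hc : c = a
    · subst hc; simp
    · have hfc : f c ≠ f a := fun h => hc (hf mem_cons_self ha h)
      rw [map_cons, idxOf_cons_ne _ hfc, idxOf_cons_ne _ hc,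
        ih (hf.mono fun _ => mem_cons_of_mem c) (by simpa [Ne.symm hc] using ha)]

theorem ncard_setOf_lt_comp_le_choose_two [Fintype α] {β : Type*} [LinearOrder β] (g : α → β) :
    {p : α × α | g p.1 < g p.2}.ncard ≤ (Fintype.card α).choose 2 := by
  classical
  calc {p : α × α | g p.1 < g p.2}.ncard
      ≤ (↑(Finset.powersetCard 2 (Finset.univ : Finset α)) : Set (Finset α)).ncard := by
        refine Set.ncard_le_ncard_of_injOn (fun p => {p.1, p.2}) ?_ ?_
        · intro p hp
          have hne : p.1 ≠ p.2 := ne_of_apply_ne g (ne_of_lt hp)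
          simp [Finset.card_pair hne]
        -- `g` tells which element of `{a, b}` comes first
        · rintro ⟨a, b⟩ hab ⟨c, d⟩ hcd h
          simp only [Set.mem_ofPred_eq] at hab hcd h
          have hc : c ∈ ({a, b} : Finset α) := by simp [h]
          have hd : d ∈ ({a, b} : Finset α) := by simp [h]
          simp only [Finset.mem_insert, Finset.mem_singleton] at hc hd
          rcases hc with rfl | rfl <;> rcases hd with rfl | rfl
          all_goals first | rfl | (exfalso; order)
    _ = (Fintype.card α).choose 2 := by
        rw [Set.ncard_coe_finset, Finset.card_powersetCard, Finset.card_univ]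

theorem ParamEquiv.exists_idxOf_eq [DecidableEq α] {u v : List α} (h : ParamEquiv u v)
    (hne : {a | a ∈ u} ≠ {a | a ∈ v}) : ∃ a ∈ u, ∃ b ∈ v, b ∉ u ∧ v.idxOf b = u.idxOf a := by
  obtain ⟨f, hf, rfl⟩ := h
  have himage : {b | b ∈ u.map f} = f '' {a | a ∈ u} := by ext; simp [eq_comm]
  have hnotsub : ¬ {b | b ∈ u.map f} ⊆ {a | a ∈ u} := fun hsub =>
    hne (Set.eq_of_subset_of_ncard_le hsub
      (by rw [himage, hf.ncard_image]) u.finite_toSet).symm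
  obtain ⟨b, hbv, hbu⟩ := Set.not_subset.1 hnotsub
  obtain ⟨a, hau, rfl⟩ := List.mem_map.1 hbv
  exact ⟨a, hau, f a, hbv, hbu, List.idxOf_map_of_injOn hf hau⟩

theorem ParamEquiv.exists_length_eq_idxOf_sub [DecidableEq α] {u v w : List α}
    (h : ParamEquiv u v) (hne : {a | a ∈ u} ≠ {a | a ∈ v}) (hw : u ++ v <+: w) :
    ∃ p : α × α, w.idxOf p.1 < w.idxOf p.2 ∧ u.length = w.idxOf p.2 - w.idxOf p.1 := by
  obtain ⟨a, hau, b, hbv, hbu, hab⟩ := h.exists_idxOf_eq hne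
  obtain ⟨t, rfl⟩ := hw
  have ha : (u ++ v ++ t).idxOf a = u.idxOf a := by
    rw [append_assoc, idxOf_append_of_mem hau]
  have hb : (u ++ v ++ t).idxOf b = u.length + u.idxOf a := by
    rw [append_assoc, idxOf_append_of_notMem hbu, idxOf_append_of_mem hbv, hab]
  have hu : 0 < u.length := length_pos_of_mem hau
  refine ⟨(a, b), ?_, ?_⟩ <;> dsimp only <;> rw [ha, hb] <;> omega

def imbalancedSquarePrefixes (w : List α) : Set (List α) :=
  {s | s <+: w ∧ ∃ u v : List α, s = u ++ v ∧
    u.length = v.length ∧ ParamEquiv u v ∧ {a | a ∈ u} ≠ {a | a ∈ v}}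

theorem imbalancedSquarePrefixes_subset_image [DecidableEq α] (w : List α) :
    imbalancedSquarePrefixes w ⊆
      (fun p : α × α => w.take (2 * (w.idxOf p.2 - w.idxOf p.1))) ''
        {p | w.idxOf p.1 < w.idxOf p.2} := by
  rintro s ⟨hs, u, v, rfl, hlen, h, hne⟩
  obtain ⟨p, hp, hgap⟩ := h.exists_length_eq_idxOf_sub hne hs
  refine ⟨p, hp, ?_⟩
  rw [prefix_iff_eq_take.1 hs, length_append, ← hlen]
  dsimp only
  rw [← hgap, two_mul]

theorem imbalancedSquarePrefixes_finite [Finite α] (w : List α) :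
    (imbalancedSquarePrefixes w).Finite := by
  classical
  exact ((Set.toFinite _).image _).subset (imbalancedSquarePrefixes_subset_image w)

theorem ncard_imbalancedSquarePrefixes_le [Fintype α] (w : List α) :
    (imbalancedSquarePrefixes w).ncard ≤ (Fintype.card α).choose 2 := by
  classical
  calc (imbalancedSquarePrefixes w).ncard
      ≤ ((fun p : α × α => w.take (2 * (w.idxOf p.2 - w.idxOf p.1))) ''
          {p | w.idxOf p.1 < w.idxOf p.2}).ncard :=
        Set.ncard_le_ncard (imbalancedSquarePrefixes_subset_image w) ((Set.toFinite _).image _)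
    _ ≤ {p : α × α | w.idxOf p.1 < w.idxOf p.2}.ncard := Set.ncard_image_le (Set.toFinite _)
    _ ≤ (Fintype.card α).choose 2 := ncard_setOf_lt_comp_le_choose_two (w.idxOf ·)

def imbalancedSquareFragments (w : List α) : Set (ℕ × ℕ) :=
  {p | ∃ x u v y : List α, w = x ++ u ++ v ++ y ∧
    x.length = p.1 ∧ x.length + u.length + v.length = p.2 ∧
    u.length = v.length ∧ ParamEquiv u v ∧ {a | a ∈ u} ≠ {a | a ∈ v}}

theorem imbalancedSquareFragments_subset_biUnion (w : List α) :
    imbalancedSquareFragments w ⊆ ⋃ i ∈ Finset.range w.length,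
      (fun s => (i, i + s.length)) '' imbalancedSquarePrefixes (w.drop i) := by
  rintro ⟨i, j⟩ ⟨x, u, v, y, rfl, rfl, rfl, hlen, h, hne⟩
  have hu : u ≠ [] := by rintro rfl; exact hne (by simp [eq_nil_of_length_eq_zero hlen.symm])
  refine Set.mem_biUnion (x := x.length) (Finset.mem_range.2 ?_)
    ⟨u ++ v, ⟨?_, u, v, rfl, hlen, h, hne⟩, ?_⟩
  · simp [length_pos_iff.2 hu]
  · simp [append_assoc]
  · simp [add_assoc]

theorem ncard_imbalancedSquareFragments_le [Fintype α] (w : List α) :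
    (imbalancedSquareFragments w).ncard ≤ (Fintype.card α).choose 2 * w.length := by
  calc (imbalancedSquareFragments w).ncard
      ≤ (⋃ i ∈ Finset.range w.length,
          (fun s => (i, i + s.length)) '' imbalancedSquarePrefixes (w.drop i)).ncard :=
        Set.ncard_le_ncard (imbalancedSquareFragments_subset_biUnion w)
          ((Finset.finite_toSet _).biUnion fun i _ => (imbalancedSquarePrefixes_finite _).image _)
    _ ≤ ∑ i ∈ Finset.range w.length,
          ((fun s => (i, i + s.length)) '' imbalancedSquarePrefixes (w.drop i)).ncard :=
        Finset.set_ncard_biUnion_le _ _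
    _ ≤ ∑ _i ∈ Finset.range w.length, (Fintype.card α).choose 2 :=
        Finset.sum_le_sum fun i _ => (Set.ncard_image_le (imbalancedSquarePrefixes_finite _)).trans
          (ncard_imbalancedSquarePrefixes_le _)
    _ = (Fintype.card α).choose 2 * w.length := by simp [mul_comm]

end

/-- Let `w` be a word of length `n` over an alphabet of size `σ`.  The number of pairs of
positions (encoded as (0-based start, end-exclusive) pairs) whose fragment is an imbalanced
parameterized square is at most `(σ choose 2) · n`; in particular, at most `(σ choose 2)`
prefixes of `w` are imbalanced parameterized squares. -/
theorem imbalanced_parameterized_squares_bound {α : Type*} [Fintype α] (w : List α) (n : ℕ)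
    (hn : w.length = n) :
    ({p : ℕ × ℕ | ∃ x u v y : List α, w = x ++ u ++ v ++ y ∧
        x.length = p.1 ∧ x.length + u.length + v.length = p.2 ∧
        u.length = v.length ∧ ParamEquiv u v ∧
        {a | a ∈ u} ≠ {a | a ∈ v}}.ncard ≤ (Fintype.card α).choose 2 * n) ∧
    ({s : List α | s <+: w ∧ ∃ u v : List α, s = u ++ v ∧
        u.length = v.length ∧ ParamEquiv u v ∧
        {a | a ∈ u} ≠ {a | a ∈ v}}.ncard ≤ (Fintype.card α).choose 2) :=
  ⟨hn ▸ ncard_imbalancedSquareFragments_le w, ncard_imbalancedSquarePrefixes_le w⟩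
end

section
/- Let w be a word of length n over a linearly ordered alphabet Σ with |Σ| = σ. Then the number of pairs (i, j) such that the fragment w[i..j] is an order-preserving square but is not an ordinary square (i.e., w[i..j] is not of the form zz) is at most (σ choose 2)·n. -/
/-- Over a linearly ordered alphabet, words `u` and `v` are order-preserving-equivalent if
`|u| = |v|` and there is a strictly increasing bijection `f : Alph(u) → Alph(v)` with
`v[i] = f(u[i])` for all `i`; equivalently, `v = u.map f` for some function `f` strictly
increasing on the set of letters of `u` (then `f` automatically maps `Alph(u)` bijectively
onto `Alph(v)`). -/
def OpEquiv {α : Type*} [LinearOrder α] (u v : List α) : Prop :=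
  ∃ f : α → α, StrictMonoOn f {a | a ∈ u} ∧ v = u.map f

/-! Write an order-preserving square as `u ++ u.map f` with `f` strictly increasing on the letters
of `u`. If it is not a square then `f` does not map the letters of `u` onto themselves (a strictly
increasing self-map of a finite chain is the identity), so some letter `a` of `u` does not occur in
`v = u.map f`. The last occurrences of `a` and of `f a` in `w.take j` (where `j` is the end of the
square) then sit at corresponding positions of `u` and `v`, exactly `|u|` apart. Hence `j` and the
unordered pair `{a, f a}` of distinct letters determine the start `j - 2|u|`, which leaves at most
`n · (σ choose 2)` such squares. -/

theorem Set.Finite.eqOn_id_of_strictMonoOn {α : Type*} [LinearOrder α] {s : Set α} {f : α → α}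
    (hs : s.Finite) (hf : StrictMonoOn f s) (himage : f '' s = s) : Set.EqOn f id s := by
  have : Finite s := hs.to_subtype
  intro a ha
  exact congrArg (fun e : s ≃o s => (e ⟨a, ha⟩ : α))
    (Subsingleton.elim ((hf.orderIso f s).trans (OrderIso.setCongr _ _ himage)) (OrderIso.refl s))

namespace List

variable {α β : Type*}

theorem idxOf_map_of_injOn_s9 [DecidableEq α] [DecidableEq β] {f : α → β} {l : List α} {a : α}
    (hf : Set.InjOn f {b | b ∈ l}) (ha : a ∈ l) : (l.map f).idxOf (f a) = l.idxOf a := by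
  induction l with
  | nil => simp at ha
  | cons b l ih =>
    by_cases hba : b = a
    · subst hba
      simp
    · have hfba : f b ≠ f a := fun h => hba (hf mem_cons_self ha h)
      have ha' : a ∈ l := by simpa [Ne.symm hba] using ha
      rw [map_cons, idxOf_cons_ne _ hfba, idxOf_cons_ne _ hba,
        ih (hf.mono fun _ => mem_cons_of_mem b) ha']

theorem exists_mem_notMem_map_of_strictMonoOn [LinearOrder α] {f : α → α} {u : List α}
    (hf : StrictMonoOn f {a | a ∈ u}) (hne : u.map f ≠ u) : ∃ a ∈ u, a ∉ u.map f := by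
  by_contra! h
  have hsub : {a | a ∈ u} ⊆ f '' {a | a ∈ u} := fun a ha => by simpa using h a ha
  have himage : f '' {a | a ∈ u} = {a | a ∈ u} :=
    (Set.eq_of_subset_of_ncard_le hsub hf.injOn.ncard_image.le (u.finite_toSet.image f)).symm
  exact hne ((map_congr_left (u.finite_toSet.eqOn_id_of_strictMonoOn hf himage)).trans (map_id u))

/-- `s.reverse.idxOf a` counts the letters after the last occurrence of `a` in `s`. -/
def lastOccurrenceDist [DecidableEq α] (s : List α) : Sym2 α → ℕ :=
  Sym2.lift ⟨fun a b => Nat.dist (s.reverse.idxOf a) (s.reverse.idxOf b),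
    fun _ _ => Nat.dist_comm _ _⟩

theorem lastOccurrenceDist_append_map [DecidableEq α] {f : α → α} (x : List α) {u : List α}
    {a : α} (hf : Set.InjOn f {b | b ∈ u}) (ha : a ∈ u) (ha' : a ∉ u.map f) :
    (x ++ u ++ u.map f).lastOccurrenceDist s(a, f a) = u.length := by
  have hrev : (x ++ u ++ u.map f).reverse = u.reverse.map f ++ (u.reverse ++ x.reverse) := by
    simp [map_reverse]
  have hidx_a : (x ++ u ++ u.map f).reverse.idxOf a = u.length + u.reverse.idxOf a := by
    rw [hrev, idxOf_append_of_notMem (by simpa [map_reverse] using ha'),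
      idxOf_append_of_mem (mem_reverse.2 ha), length_map, length_reverse]
  have hidx_fa : (x ++ u ++ u.map f).reverse.idxOf (f a) = u.reverse.idxOf a := by
    rw [hrev, idxOf_append_of_mem (mem_map_of_mem (mem_reverse.2 ha)),
      idxOf_map_of_injOn_s9 (hf.mono fun _ => mem_reverse.1) (mem_reverse.2 ha)]
  simp only [lastOccurrenceDist, Sym2.lift_mk, hidx_a, hidx_fa, Nat.dist]
  omega

end List

theorem OpEquiv.exists_lastOccurrenceDist_eq {α : Type*} [LinearOrder α] {u v : List α}
    (x : List α) (hop : OpEquiv u v) (hne : u ≠ v) :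
    ∃ e : Sym2 α, ¬ e.IsDiag ∧ (x ++ u ++ v).lastOccurrenceDist e = u.length := by
  obtain ⟨f, hf, rfl⟩ := hop
  obtain ⟨a, ha, ha'⟩ := u.exists_mem_notMem_map_of_strictMonoOn hf hne.symm
  refine ⟨s(a, f a), fun h => ha' ?_, x.lastOccurrenceDist_append_map hf.injOn ha ha'⟩
  rw [Sym2.mk_isDiag_iff.1 h]
  exact List.mem_map_of_mem ha

/-- Let `w` be a word of length `n` over a linearly ordered alphabet of size `σ`.  The
number of pairs of positions (encoded as (0-based start, end-exclusive) pairs) whose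
fragment is an order-preserving square but not an ordinary square `z ++ z` is at most
`(σ choose 2) · n`. -/
theorem op_squares_not_squares_bound {α : Type*} [Fintype α] [LinearOrder α] (w : List α)
    (n : ℕ) (hn : w.length = n) :
    {p : ℕ × ℕ | ∃ x u v y : List α, w = x ++ u ++ v ++ y ∧
        x.length = p.1 ∧ x.length + u.length + v.length = p.2 ∧
        u.length = v.length ∧ OpEquiv u v ∧
        ¬∃ z : List α, u ++ v = z ++ z}.ncard ≤ (Fintype.card α).choose 2 * n := by
  set T : Finset (ℕ × Sym2 α) := Finset.Icc 1 n ×ˢ Finset.univ.filter fun e => ¬ e.IsDiag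
  set start : ℕ × Sym2 α → ℕ × ℕ := fun q => (q.1 - 2 * (w.take q.1).lastOccurrenceDist q.2, q.1)
  calc _ ≤ (↑(T.image start) : Set (ℕ × ℕ)).ncard := Set.ncard_le_ncard ?_ (Finset.finite_toSet _)
    _ ≤ T.card := (Set.ncard_coe_finset _).trans_le Finset.card_image_le
    _ = _ := by
      rw [Finset.card_product, Nat.card_Icc, ← Fintype.card_subtype, Sym2.card_subtype_not_diag,
        Nat.add_sub_cancel, mul_comm]
  rintro ⟨i, j⟩ ⟨x, u, v, y, rfl, rfl, rfl, hlen, hop, hsq⟩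
  have hne : u ≠ v := fun h => hsq ⟨u, by rw [h]⟩
  have hu : 0 < u.length := List.length_pos_iff.2 fun h => hne (by
    rw [h, eq_comm, ← List.length_eq_zero_iff, ← hlen, h, List.length_nil])
  obtain ⟨e, he, hdist⟩ := hop.exists_lastOccurrenceDist_eq x hne
  have htake : (x ++ u ++ v ++ y).take (x.length + u.length + v.length) = x ++ u ++ v :=
    List.take_left' (by simp only [List.length_append])
  refine Finset.mem_image.2 ⟨(x.length + u.length + v.length, e), ?_, ?_⟩
  · simp only [List.length_append] at hn
    simp only [T, Finset.mem_product, Finset.mem_Icc, Finset.mem_filter, Finset.mem_univ, true_and]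
    exact ⟨⟨by omega, by omega⟩, he⟩
  · simp only [start, htake, hdist, Prod.mk.injEq, and_true]
    omega
end

section
/- Let Σ be a finite alphabet, π a permutation of Σ, and v, w ∈ Σ*. Then h_π(vw) = h_π(v) · h_{π⊙v}(w), where π⊙v = L(πv) and · denotes concatenation. -/
/-- `lastOccs w = L(w)`: the word obtained from `w` by deleting every occurrence of each
letter except its last one, so it lists each letter of `Alph(w)` exactly once, ordered by
last occurrence. -/
def lastOccs {α : Type*} [DecidableEq α] (w : List α) : List α :=
  w.reverse.dedup.reverse

/-- `ind x a`: the number of distinct letters occurring in `x` strictly after the last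
occurrence of `a` in `x` (for `a` occurring in `x`). -/
def ind {α : Type*} [DecidableEq α] (x : List α) (a : α) : ℕ :=
  x.reverse.dedup.idxOf a

/-- The encoding `h_π(w)`: the word `z` with `|z| = |w|` and
`z[i] = ind_{π · w[1..i−1]} (w[i])` for `i = 1, …, |w|`. -/
def henc {α : Type*} [DecidableEq α] (π : List α) : List α → List ℕ
  | [] => []
  | a :: w => ind π a :: henc (π ++ [a]) w

/-!
The encoding reads its history word `x` only through `L(x)`, i.e. through `x.reverse.dedup`:
both `ind_x` and `L(x a)` are determined by it. Splitting `h_π(vw)` at `v` leaves `w` encoded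
against the history `π v`, which may therefore be replaced by `L(π v) = π ⊙ v`.
-/

theorem List.dedup_cons_congr {α : Type*} [DecidableEq α] {l₁ l₂ : List α}
    (h : l₁.dedup = l₂.dedup) (a : α) : (a :: l₁).dedup = (a :: l₂).dedup := by
  rw [← List.singleton_append, List.dedup_append, h, ← List.dedup_append, List.singleton_append]

theorem henc_congr {α : Type*} [DecidableEq α] {x y : List α}
    (h : x.reverse.dedup = y.reverse.dedup) (w : List α) : henc x w = henc y w := by
  induction w generalizing x y with
  | nil => rfl
  | cons a w ih =>
    have hind : ind x a = ind y a := by rw [ind, ind, h]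
    have hhist : (x ++ [a]).reverse.dedup = (y ++ [a]).reverse.dedup := by
      simpa only [List.reverse_append, List.reverse_singleton, List.singleton_append]
        using List.dedup_cons_congr h a
    rw [henc, henc, hind, ih hhist]

theorem henc_append_eq_henc_append_henc {α : Type*} [DecidableEq α] (π v w : List α) :
    henc π (v ++ w) = henc π v ++ henc (π ++ v) w := by
  induction v generalizing π with
  | nil => simp [henc]
  | cons a v ih => rw [List.cons_append, henc, henc, ih, List.append_assoc, List.singleton_append,
      List.cons_append]

theorem reverse_dedup_lastOccs {α : Type*} [DecidableEq α] (x : List α) :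
    (lastOccs x).reverse.dedup = x.reverse.dedup := by
  rw [lastOccs, List.reverse_reverse, List.dedup_idem]

theorem henc_append_general {α : Type*} [DecidableEq α] (π : List α) (v w : List α) :
    henc π (v ++ w) = henc π v ++ henc (lastOccs (π ++ v)) w := by
  rw [henc_append_eq_henc_append_henc, henc_congr (reverse_dedup_lastOccs (π ++ v)) w]

/-- Let `π` be a permutation of the finite alphabet `Σ` and `v, w ∈ Σ*`.  Then
`h_π(vw) = h_π(v) · h_{π⊙v}(w)`, where `π⊙v = L(πv)`. -/
theorem henc_append {α : Type*} [Fintype α] [DecidableEq α] (π : List α)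
    (hπ : π.Nodup ∧ ∀ a : α, a ∈ π) (v w : List α) :
    henc π (v ++ w) = henc π v ++ henc (lastOccs (π ++ v)) w :=
  henc_append_general π v w
end

section
/- Let Σ be a finite alphabet with |Σ| = σ and let w ∈ Σ*. Then the number of even lengths 2k ≥ 2 such that the prefix w[1..2k] is a parameterized square and no fragment w[i..i+2k−1] of w with i > 1 is parameterized-equivalent to w[1..2k] is at most 2·σ!. -/
/-- A parameterized square is a word `u ++ v` with `|u| = |v|` and `u`, `v`
parameterized-equivalent. -/
def IsParamSquare {α : Type*} (s : List α) : Prop :=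
  ∃ u v : List α, s = u ++ v ∧ u.length = v.length ∧ ParamEquiv u v

/-!
Each counted `k` comes with a permutation `g` of the alphabet such that `w[k, 2k) = g(w[0, k))`,
and no permutation serves three counted `k₁ < k₂ < k₃`. If `2k₁ ≤ k₃`, then `w[k₃, k₃ + 2k₁)` is
`g(w[0, 2k₁))`, a later occurrence. Otherwise, comparing the twisted squares pairwise shows that
`w[0, k₁)` has the periods `k₂ - k₁` and `k₃ - k₂`, and `w[0, k₂)` has the period `k₃ - k₂`;
by Fine–Wilf their gcd is a period of `w[0, k₁)`, hence of `w[0, k₂)` (it divides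
`k₃ - k₂ ≤ k₁`). With the twists at `k₁` and `k₂` this makes `k₂ - k₁` a period of
`w[0, k₁ + k₂)`, so `w[k₂ - k₁, k₁ + k₂) = w[0, 2k₁)` is a later occurrence.
-/

theorem Set.ncard_le_two_mul_card_of_no_triple_in_fiber {ι β : Type*} [LinearOrder ι]
    [Fintype β] {s : Set ι} (f : ι → β)
    (h : ∀ a ∈ s, ∀ b ∈ s, ∀ c ∈ s, a < b → b < c → f a = f b → f b = f c → False) :
    s.ncard ≤ 2 * Fintype.card β := by
  classical
  rcases s.finite_or_infinite with hs | hs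
  · obtain ⟨t, rfl⟩ := hs.exists_finset_coe
    rw [Set.ncard_coe_finset, ← Finset.card_univ]
    refine Finset.card_le_mul_card_image_of_maps_to (f := f) (fun _ _ ↦ Finset.mem_univ _) 2
      fun y _ ↦ ?_
    by_contra! hu
    set e := (t.filter (f · = y)).orderEmbOfFin rfl
    have mem (i) : f (e i) = y ∧ e i ∈ t := by
      have := Finset.orderEmbOfFin_mem _ rfl i
      rw [Finset.mem_filter] at this
      exact this.symm
    exact h _ (mem ⟨0, by omega⟩).2 _ (mem ⟨1, by omega⟩).2 _ (mem ⟨2, hu⟩).2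
      (e.strictMono (by simp)) (e.strictMono (by simp))
      ((mem _).1.trans (mem _).1.symm) ((mem _).1.trans (mem _).1.symm)
  · rw [hs.ncard]
    exact Nat.zero_le _

namespace List

variable {α : Type*} {w : List α}

theorem HasPeriod.of_dvd {d p : ℕ} (h : w.HasPeriod d) (hdp : d ∣ p) : w.HasPeriod p := by
  rw [hasPeriod_iff_forall_getElem?_mod] at h
  rw [hasPeriod_iff_getElem?]
  intro i hi
  rw [h i (by omega), h (i + p) (by omega), Nat.add_mod, Nat.mod_eq_zero_of_dvd hdp,
    Nat.add_zero, Nat.mod_mod]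

theorem HasPeriod.of_take_of_dvd {n r d : ℕ} (hr : w.HasPeriod r)
    (hd : (w.take n).HasPeriod d) (hdr : d ∣ r) (hr0 : 0 < r) (hrn : r ≤ n) :
    w.HasPeriod d := by
  rw [hasPeriod_iff_forall_getElem?_mod] at hr hd ⊢
  intro i hi
  have hir : i % r < n := (Nat.mod_lt i hr0).trans_le hrn
  have := hd (i % r) (by simp [hir, (Nat.mod_le i r).trans_lt hi])
  rw [getElem?_take_of_lt hir, getElem?_take_of_lt ((Nat.mod_le _ _).trans_lt hir),
    Nat.mod_mod_of_dvd i hdr] at this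
  rw [hr i hi, this]

end List

section

variable {α : Type*}

theorem frag_zero (w : List α) (n : ℕ) : frag w 0 n = w.take n := by
  simp [frag]

theorem frag_eq_take_of_hasPeriod {w : List α} {n p : ℕ}
    (h : (w.take (n + p)).HasPeriod p) (hlen : n + p ≤ w.length) : frag w p n = w.take n := by
  have hpre := h.drop_prefix
  rwa [List.drop_take, Nat.add_sub_cancel, List.prefix_iff_eq_take, List.length_take,
    List.length_drop, min_eq_left (by omega), List.take_take, min_eq_left (by omega)] at hpre

theorem ParamEquiv.exists_perm [Fintype α] {u v : List α} (h : ParamEquiv u v) :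
    ∃ g : Equiv.Perm α, v = u.map g := by
  obtain ⟨f, hf, rfl⟩ := h
  obtain ⟨g, hg⟩ := Set.MapsTo.exists_equiv_extend_of_card_eq (t := Finset.univ)
    Finset.card_univ.symm (fun _ _ ↦ Finset.mem_coe.2 (Finset.mem_univ _)) hf
  exact ⟨g.trans (Equiv.subtypeUnivEquiv Finset.mem_univ),
    List.map_congr_left fun a ha ↦ (hg a ha).symm⟩

theorem IsParamSquare.paramEquiv_take_drop {s : List α} (h : IsParamSquare s) :
    ParamEquiv (s.take (s.length / 2)) (s.drop (s.length / 2)) := by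
  obtain ⟨u, v, rfl, huv, h⟩ := h
  have : (u ++ v).length / 2 = u.length := by simp; omega
  rwa [this, List.take_left, List.drop_left]

def TwistedSquarePrefix (g : α → α) (w : List α) (k : ℕ) : Prop :=
  2 * k ≤ w.length ∧ ∀ i < k, w[k + i]? = w[i]?.map g

namespace TwistedSquarePrefix

variable {g : α → α} {w : List α} {k k' : ℕ}

theorem frag_eq_map (h : TwistedSquarePrefix g w k) {n : ℕ} (hn : n ≤ k) :
    frag w k n = (w.take n).map g := by
  refine List.ext_getElem? fun i ↦ ?_
  rw [frag, List.getElem?_map, List.getElem?_take, List.getElem?_take, List.getElem?_drop]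
  split_ifs with hi
  · exact h.2 i (by omega)
  · rfl

theorem hasPeriod_take (hg : g.Injective) (h : TwistedSquarePrefix g w k)
    (h' : TwistedSquarePrefix g w k') (hkk' : k ≤ k') : (w.take k).HasPeriod (k' - k) := by
  rw [List.hasPeriod_iff_getElem?]
  intro i hi
  simp only [List.length_take] at hi
  rw [List.getElem?_take_of_lt (by omega), List.getElem?_take_of_lt (by omega)]
  apply Option.map_injective hg
  rw [← h'.2 i (by omega), ← h.2 (i + (k' - k)) (by omega)]
  congr 1
  omega

theorem hasPeriod_take_add_of_three (hg : g.Injective) {k₁ k₂ k₃ : ℕ}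
    (h₁ : TwistedSquarePrefix g w k₁) (h₂ : TwistedSquarePrefix g w k₂)
    (h₃ : TwistedSquarePrefix g w k₃) (h₁₂ : k₁ < k₂) (h₂₃ : k₂ < k₃) (h₃₁ : k₃ < 2 * k₁) :
    (w.take (k₁ + k₂)).HasPeriod (k₂ - k₁) := by
  set p := k₂ - k₁
  set r := k₃ - k₂
  have hr₁ : (w.take k₁).HasPeriod r :=
    (h₂.hasPeriod_take hg h₃ h₂₃.le).infix (List.take_prefix_take_left h₁₂.le).isInfix
  have hd₁ : (w.take k₁).HasPeriod (p.gcd r) :=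
    (h₁.hasPeriod_take hg h₂ h₁₂.le).gcd hr₁ (by have := h₁.1; simp only [List.length_take, le_inf_iff]; omega)
  have hd₂ : (w.take k₂).HasPeriod p := by
    refine (List.HasPeriod.of_take_of_dvd (n := k₁) (h₂.hasPeriod_take hg h₃ h₂₃.le) ?_
      (Nat.gcd_dvd_right p r) (by omega) (by omega)).of_dvd (Nat.gcd_dvd_left p r)
    rwa [List.take_take, min_eq_left (by omega)]
  rw [List.hasPeriod_iff_getElem?] at hd₂ ⊢
  intro i hi
  simp only [List.length_take] at hi hd₂
  rw [List.getElem?_take_of_lt (by omega), List.getElem?_take_of_lt (by omega)]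
  rcases lt_or_ge i k₁ with hik | hik
  · have := hd₂ i (by omega)
    rwa [List.getElem?_take_of_lt (by omega), List.getElem?_take_of_lt (by omega)] at this
  · obtain ⟨j, rfl⟩ := Nat.exists_eq_add_of_le hik
    rw [h₁.2 j (by omega), ← h₂.2 j (by omega)]
    congr 1
    omega

end TwistedSquarePrefix

theorem IsParamSquare.exists_twistedSquarePrefix [Fintype α] {w : List α} {k : ℕ}
    (hk : 2 * k ≤ w.length) (h : IsParamSquare (frag w 0 (2 * k))) :
    ∃ g : Equiv.Perm α, TwistedSquarePrefix g w k := by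
  have hhalf := h.paramEquiv_take_drop
  rw [frag_zero, List.length_take, min_eq_left hk, Nat.mul_div_cancel_left k two_pos,
    List.take_take, min_eq_left (by omega), List.drop_take, two_mul, Nat.add_sub_cancel] at hhalf
  obtain ⟨g, hg⟩ := hhalf.exists_perm
  refine ⟨g, hk, fun i hi ↦ ?_⟩
  have := congrArg (·[i]?) hg
  simpa only [hi, List.getElem?_take_of_lt, List.getElem?_drop, List.map_take,
    List.getElem?_map] using this

end

/-- Let `Σ` be an alphabet of size `σ` and `w ∈ Σ*`.  The number of even lengths `2k ≥ 2`
such that the prefix of `w` of length `2k` is a parameterized square and no fragment of `w`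
of length `2k` starting at a later position is parameterized-equivalent to this prefix, is
at most `2·σ!`. -/
theorem param_square_prefixes_without_later_occurrence {α : Type*} [Fintype α]
    (w : List α) :
    {k : ℕ | 1 ≤ k ∧ 2 * k ≤ w.length ∧ IsParamSquare (frag w 0 (2 * k)) ∧
        ¬∃ s : ℕ, 1 ≤ s ∧ s + 2 * k ≤ w.length ∧
          ParamEquiv (frag w 0 (2 * k)) (frag w s (2 * k))}.ncard ≤
      2 * (Fintype.card α).factorial := by
  classical
  choose! g hg using fun k (hk : k ∈ {k : ℕ | 1 ≤ k ∧ 2 * k ≤ w.length ∧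
      IsParamSquare (frag w 0 (2 * k)) ∧ _}) ↦ hk.2.2.1.exists_twistedSquarePrefix hk.2.1
  rw [← Fintype.card_perm]
  refine Set.ncard_le_two_mul_card_of_no_triple_in_fiber g
    fun a ha b hb c hc hab hbc hgab hgbc ↦ ha.2.2.2 ?_
  have ta := hg a ha
  have tb := hgab ▸ hg b hb
  have tc := hgab ▸ hgbc ▸ hg c hc
  by_cases hca : 2 * a ≤ c
  · refine ⟨c, by omega, by have := tc.1; omega, g a, (g a).injective.injOn, ?_⟩
    rw [frag_zero, tc.frag_eq_map hca]
  · have hper := ta.hasPeriod_take_add_of_three (g a).injective tb tc hab hbc (by omega)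
    refine ⟨b - a, by omega, by have := tc.1; omega, id, Set.injOn_id _, ?_⟩
    rw [List.map_id, frag_eq_take_of_hasPeriod (by rwa [two_mul, Nat.add_assoc,
      Nat.add_sub_cancel' hab.le]) (by have := tc.1; omega), frag_zero]
end

section
/- Let ψ be the morphism on words over {0,1,2} given by ψ(0) = 10, ψ(1) = 11, ψ(2) = 12, where {0,1,2} carries its natural linear order. If a word w over {0,1,2} is square-free (contains no nonempty fragment of the form uu), then ψ(w) contains no order-preserving square of length greater than 2; i.e., for every fragment uv of ψ(w) with |u| = |v| = k ≥ 2, the words u and v are not order-preserving-equivalent. -/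
/-- The morphism `ψ : 0 ↦ 10, 1 ↦ 11, 2 ↦ 12` on the ordered ternary alphabet `{0,1,2}`. -/
def psi (a : Fin 3) : List (Fin 3) := [1, a]

def SquareFreeWord {α : Type*} (w : List α) : Prop :=
  ∀ x u y : List α, w = x ++ u ++ u ++ y → u = []

theorem SquareFreeWord.eq_zero_of_getElem?_eq {α : Type*} {w : List α} (hw : SquareFreeWord w)
    {q m : ℕ} (hlen : q + 2 * m ≤ w.length) (h : ∀ t < m, w[q + t]? = w[q + m + t]?) :
    m = 0 := by
  set u := (w.drop q).take m
  have hcopy : (w.drop (q + m)).take m = u := by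
    ext t : 1
    simp only [u, List.getElem?_take, List.getElem?_drop]
    split_ifs with ht
    · exact (h t ht).symm
    · rfl
  have hsplit : w = w.take q ++ u ++ u ++ w.drop (q + 2 * m) := by
    conv_lhs => rw [← List.take_append_drop q w, ← List.take_append_drop m (w.drop q),
      List.drop_drop, ← List.take_append_drop m (w.drop (q + m)), List.drop_drop, hcopy]
    rw [show q + m + m = q + 2 * m by omega]
    simp only [u, List.append_assoc]
  have hu : u.length = m := by simp only [u, List.length_take, List.length_drop]; omega
  rw [← hu, hw _ _ _ hsplit, List.length_nil]

theorem OpEquiv.getElem?_eq_iff {α : Type*} [LinearOrder α] {u v : List α} (h : OpEquiv u v)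
    (i j : ℕ) : u[i]? = u[j]? ↔ v[i]? = v[j]? := by
  obtain ⟨f, hf, rfl⟩ := h
  simp only [List.getElem?_map]
  cases hi : u[i]? <;> cases hj : u[j]?
  · simp
  · simp
  · simp
  · simp only [Option.map_some, Option.some_inj]
    exact (hf.injOn.eq_iff (List.mem_of_getElem? hi) (List.mem_of_getElem? hj)).symm

theorem Fin.eqOn_id_of_strictMonoOn_of_map_one {f : Fin 3 → Fin 3} {s : Set (Fin 3)}
    (hf : StrictMonoOn f s) (h1 : 1 ∈ s) (hf1 : f 1 = 1) : Set.EqOn f id s := by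
  intro a ha
  fin_cases a
  · have h0 : f 0 < f 1 := hf ha h1 (by decide)
    rw [hf1] at h0
    exact (by omega : f 0 = 0)
  · exact hf1
  · have h2 : f 1 < f 2 := hf h1 ha (by decide)
    rw [hf1] at h2
    exact (by omega : f 2 = 2)

theorem OpEquiv.eq_of_getElem?_eq_one {u v : List (Fin 3)} (h : OpEquiv u v) {i : ℕ}
    (hu : u[i]? = some 1) (hv : v[i]? = some 1) : u = v := by
  obtain ⟨f, hf, rfl⟩ := h
  rw [List.getElem?_map, hu, Option.map_some, Option.some_inj] at hv
  have hfix := Fin.eqOn_id_of_strictMonoOn_of_map_one hf (List.mem_of_getElem? hu) hv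
  exact (List.map_congr_left hfix).trans (List.map_id u) |>.symm

theorem length_flatMap_psi (w : List (Fin 3)) : (w.flatMap psi).length = 2 * w.length := by
  simp [List.length_flatMap, psi, mul_comm]

theorem getElem?_flatMap_psi_two_mul {w : List (Fin 3)} {j : ℕ} (hj : j < w.length) :
    (w.flatMap psi)[2 * j]? = some 1 := by
  induction w generalizing j with
  | nil => simp at hj
  | cons a w ih =>
    cases j with
    | zero => rfl
    | succ j =>
      rw [List.flatMap_cons, List.getElem?_append_right (by simp [psi])]
      simpa [psi, Nat.mul_succ] using ih (by simpa using hj)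

theorem getElem?_flatMap_psi_two_mul_add_one (w : List (Fin 3)) (j : ℕ) :
    (w.flatMap psi)[2 * j + 1]? = w[j]? := by
  induction w generalizing j with
  | nil => simp
  | cons a w ih =>
    cases j with
    | zero => rfl
    | succ j =>
      rw [List.flatMap_cons, List.getElem?_append_right (by simp [psi]; omega)]
      simpa [psi, Nat.mul_succ] using ih j

theorem List.getElem?_take_drop_of_lt {α : Type*} (l : List α) (p : ℕ) {k i : ℕ}
    (hi : i < k) :
    ((l.drop p).take k)[i]? = l[p + i]? := by
  rw [List.getElem?_take_of_lt hi, List.getElem?_drop]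

theorem SquareFreeWord.eq_zero_of_flatMap_psi_take_drop_eq {w : List (Fin 3)}
    (hw : SquareFreeWord w) {p m : ℕ} (hlen : p + 4 * m ≤ 2 * w.length)
    (h : ((w.flatMap psi).drop p).take (2 * m) =
      ((w.flatMap psi).drop (p + 2 * m)).take (2 * m)) : m = 0 := by
  refine hw.eq_zero_of_getElem?_eq (q := p / 2) (by omega) fun t ht => ?_
  -- the odd position `2 * (p / 2 + t) + 1` of `ψ(w)` lies in the first half
  have hodd := congrArg (·[2 * (p / 2 + t) + 1 - p]?) h
  have hi : 2 * (p / 2 + t) + 1 - p < 2 * m := by omega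
  simp only [List.getElem?_take_drop_of_lt _ _ hi] at hodd
  rwa [show p + (2 * (p / 2 + t) + 1 - p) = 2 * (p / 2 + t) + 1 by omega,
    show p + 2 * m + (2 * (p / 2 + t) + 1 - p) = 2 * (p / 2 + m + t) + 1 by omega,
    getElem?_flatMap_psi_two_mul_add_one, getElem?_flatMap_psi_two_mul_add_one] at hodd

theorem SquareFreeWord.getElem?_flatMap_psi_ne {w : List (Fin 3)} (hw : SquareFreeWord w)
    {j : ℕ} (hj : 2 * j + 3 < 2 * w.length) :
    (w.flatMap psi)[2 * j + 1]? ≠ (w.flatMap psi)[2 * (j + 1) + 1]? := by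
  rw [getElem?_flatMap_psi_two_mul_add_one, getElem?_flatMap_psi_two_mul_add_one]
  intro hrep
  have := hw.eq_zero_of_getElem?_eq (q := j) (m := 1) (by omega) fun t ht => by
    rwa [Nat.lt_one_iff.mp ht]
  omega

section Fragments

variable {w : List (Fin 3)} {p m : ℕ}

theorem SquareFreeWord.not_opEquiv_flatMap_psi_of_even (hw : SquareFreeWord w) (hm : 0 < m)
    (hlen : p + 4 * m ≤ 2 * w.length) :
    ¬OpEquiv (((w.flatMap psi).drop p).take (2 * m))
      (((w.flatMap psi).drop (p + 2 * m)).take (2 * m)) := by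
  intro hop
  -- `2 * j` is the first even position from `p` on: both halves read `1` at offset `2 * j - p`
  set j := (p + 1) / 2
  have hi : 2 * j - p < 2 * m := by omega
  have hsq := hop.eq_of_getElem?_eq_one (i := 2 * j - p)
    (by rw [List.getElem?_take_drop_of_lt _ _ hi, show p + (2 * j - p) = 2 * j by omega]
        exact getElem?_flatMap_psi_two_mul (by omega))
    (by rw [List.getElem?_take_drop_of_lt _ _ hi,
          show p + 2 * m + (2 * j - p) = 2 * (j + m) by omega]
        exact getElem?_flatMap_psi_two_mul (by omega))
  exact hm.ne' (hw.eq_zero_of_flatMap_psi_take_drop_eq hlen hsq)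

theorem SquareFreeWord.not_opEquiv_flatMap_psi_of_odd (hw : SquareFreeWord w) (hm : 0 < m)
    (hlen : p + 2 * (2 * m + 1) ≤ 2 * w.length) :
    ¬OpEquiv (((w.flatMap psi).drop p).take (2 * m + 1))
      (((w.flatMap psi).drop (p + (2 * m + 1))).take (2 * m + 1)) := by
  intro hop
  have h02 := hop.getElem?_eq_iff 0 2
  have h0 : 0 < 2 * m + 1 := by omega
  have h2 : 2 < 2 * m + 1 := by omega
  simp only [List.getElem?_take_drop_of_lt _ _ h0, List.getElem?_take_drop_of_lt _ _ h2] at h02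
  -- one half starts at an even position and reads `1` at offsets `0` and `2`; the other half
  -- starts at an odd position, so there the equal letters are adjacent letters of `w`
  obtain ⟨j, hj | hj⟩ := Nat.even_or_odd' p
  · refine hw.getElem?_flatMap_psi_ne (j := j + m) (by omega) ?_
    rw [show 2 * (j + m) + 1 = p + (2 * m + 1) + 0 by omega,
      show 2 * (j + m + 1) + 1 = p + (2 * m + 1) + 2 by omega]
    refine h02.mp ?_
    rw [show p + 0 = 2 * j by omega, show p + 2 = 2 * (j + 1) by omega,
      getElem?_flatMap_psi_two_mul (by omega), getElem?_flatMap_psi_two_mul (by omega)]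
  · refine hw.getElem?_flatMap_psi_ne (j := j) (by omega) ?_
    rw [show 2 * j + 1 = p + 0 by omega, show 2 * (j + 1) + 1 = p + 2 by omega]
    refine h02.mpr ?_
    rw [show p + (2 * m + 1) + 0 = 2 * (j + m + 1) by omega,
      show p + (2 * m + 1) + 2 = 2 * (j + m + 2) by omega,
      getElem?_flatMap_psi_two_mul (by omega), getElem?_flatMap_psi_two_mul (by omega)]

end Fragments

/-- If a word `w` over the ordered ternary alphabet `{0,1,2}` is square-free, then `ψ(w)`
contains no order-preserving square of length greater than 2: for every fragment `u ++ v`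
of `ψ(w)` with `|u| = |v| = k ≥ 2`, the words `u` and `v` are not
order-preserving-equivalent. -/
theorem psi_of_square_free_is_op_square_free (w : List (Fin 3))
    (hsf : ∀ x u y : List (Fin 3), w = x ++ u ++ u ++ y → u = []) :
    ∀ x u v y : List (Fin 3), w.flatMap psi = x ++ u ++ v ++ y →
      u.length = v.length → 2 ≤ u.length → ¬OpEquiv u v := by
  intro x u v y hL hk hk2
  have hw : SquareFreeWord w := hsf
  have hlen : x.length + 2 * u.length ≤ 2 * w.length := by
    have := congrArg List.length hL
    simp only [length_flatMap_psi, List.length_append] at this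
    omega
  have hu : u = ((w.flatMap psi).drop x.length).take u.length := by
    rw [hL, List.append_assoc, List.append_assoc, List.drop_left' rfl, List.take_left' rfl]
  have hv : v = ((w.flatMap psi).drop (x.length + u.length)).take u.length := by
    rw [hL, List.append_assoc, List.drop_left' List.length_append, List.take_left' hk.symm]
  rw [hu, hv]
  obtain ⟨m, hm | hm⟩ := Nat.even_or_odd' u.length
  · rw [hm]
    exact hw.not_opEquiv_flatMap_psi_of_even (by omega) (by omega)
  · rw [hm]
    exact hw.not_opEquiv_flatMap_psi_of_odd (by omega) (by omega)
end

section
/- There exists an infinite word x : ℕ → {0,1,2} over the linearly ordered 3-letter alphabet {0,1,2} such that no fragment of x of length 2k with k ≥ 2 is an order-preserving square; i.e., x avoids order-preserving squares of length greater than 2. -/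
def tb (n : ℕ) : Bool :=
  if h : n = 0 then false else ((n % 2 == 1)).xor (tb (n / 2))
decreasing_by exact Nat.div_lt_self (Nat.pos_of_ne_zero h) one_lt_two

lemma tb0 : tb 0 = false := by rw [tb]; simp

lemma tbE (n : ℕ) : tb (2 * n) = tb n := by
  rcases Nat.eq_zero_or_pos n with rfl | h
  · norm_num
  · conv_lhs => rw [tb]
    have h1 : ¬(2 * n = 0) := by omega
    have h2 : 2 * n % 2 = 0 := by omega
    have h3 : 2 * n / 2 = n := by omega
    simp [h1, h2, h3]

lemma tbO (n : ℕ) : tb (2 * n + 1) = !(tb n) := by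
  conv_lhs => rw [tb]
  have h1 : ¬(2 * n + 1 = 0) := by omega
  have h2 : (2 * n + 1) % 2 = 1 := by omega
  have h3 : (2 * n + 1) / 2 = n := by omega
  simp [h1, h2, h3, Bool.xor_comm]

lemma noTriple (n : ℕ) (h1 : tb n = tb (n + 1)) (h2 : tb (n + 1) = tb (n + 2)) : False := by
  rcases Nat.even_or_odd n with ⟨n0, rfl⟩ | ⟨n0, rfl⟩
  · rw [show n0 + n0 = 2 * n0 by ring, show 2 * n0 + 1 = 2 * n0 + 1 from rfl, tbE, tbO] at h1
    simp at h1
  · rw [show 2 * n0 + 1 + 1 = 2 * (n0 + 1) by ring, show 2 * n0 + 1 + 2 = 2 * (n0 + 1) + 1 by ring,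
      tbE, tbO] at h2
    simp at h2

lemma overlap : ∀ k : ℕ, 0 < k → ∀ i : ℕ, ¬ (∀ j, j ≤ k → tb (i + j) = tb (i + j + k)) := by
  intro k
  induction k using Nat.strong_induction_on with
  | _ k IH =>
    intro hk i H
    rcases Nat.even_or_odd k with ⟨k', rfl⟩ | ⟨k', rfl⟩
    · -- k = k' + k'
      have hk' : 0 < k' := by omega
      rcases Nat.even_or_odd i with ⟨i', rfl⟩ | ⟨i', rfl⟩
      · refine IH k' (by omega) hk' i' (fun j hj => ?_)
        have h2 : tb (2 * (i' + j)) = tb (2 * (i' + j + k')) := by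
          convert H (2 * j) (by omega) using 2 <;> omega
        rwa [tbE, tbE] at h2
      · refine IH k' (by omega) hk' i' (fun j hj => ?_)
        have h2 : tb (2 * (i' + j) + 1) = tb (2 * (i' + j + k') + 1) := by
          convert H (2 * j) (by omega) using 2 <;> omega
        rw [tbO, tbO] at h2
        simpa using h2
    · -- k = 2 * k' + 1
      obtain ⟨m, hm1, hm2⟩ : ∃ m, i ≤ 2 * m ∧ 2 * m ≤ i + 1 := by
        rcases Nat.even_or_odd i with ⟨i0, rfl⟩ | ⟨i0, rfl⟩
        exacts [⟨i0, by omega, by omega⟩, ⟨i0 + 1, by omega, by omega⟩]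
      match k' with
      | 0 =>
        have e0 : tb i = tb (i + 1) := by
          convert H 0 (by omega) using 2 <;> omega
        have e1 : tb (i + 1) = tb (i + 2) := by
          convert H 1 (by omega) using 2 <;> omega
        exact noTriple i e0 e1
      | 1 =>
        have e0 : tb (2 * m) = tb (2 * (m + 1) + 1) := by
          convert H (2 * m - i) (by omega) using 2 <;> omega
        have e1 : tb (2 * m + 1) = tb (2 * (m + 2)) := by
          convert H (2 * m + 1 - i) (by omega) using 2 <;> omega
        have e2 : tb (2 * (m + 1)) = tb (2 * (m + 2) + 1) := by
          convert H (2 * m + 2 - i) (by omega) using 2 <;> omega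
        rw [tbE, tbO] at e0
        rw [tbO, tbE] at e1
        rw [tbE, tbO] at e2
        revert e0 e1 e2
        cases tb m <;> cases tb (m + 1) <;> cases tb (m + 2) <;> decide
      | Nat.succ (Nat.succ l) =>
        have f1 : tb (2 * m + 1) = tb (2 * (m + l + 3)) := by
          convert H (2 * m + 1 - i) (by omega) using 2 <;> omega
        have f2 : tb (2 * (m + 1)) = tb (2 * (m + l + 3) + 1) := by
          convert H (2 * m + 2 - i) (by omega) using 2 <;> omega
        have f3 : tb (2 * (m + 1) + 1) = tb (2 * (m + l + 4)) := by
          convert H (2 * m + 3 - i) (by omega) using 2 <;> omega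
        have f4 : tb (2 * (m + 2)) = tb (2 * (m + l + 4) + 1) := by
          convert H (2 * m + 4 - i) (by omega) using 2 <;> omega
        rw [tbO, tbE] at f1
        rw [tbE, tbO] at f2
        rw [tbO, tbE] at f3
        rw [tbE, tbO] at f4
        have g1 : tb m = tb (m + 1) := by
          revert f1 f2; cases tb m <;> cases tb (m + 1) <;> cases tb (m + l + 3) <;> decide
        have g2 : tb (m + 1) = tb (m + 2) := by
          revert f3 f4; cases tb (m + 1) <;> cases tb (m + 2) <;> cases tb (m + l + 4) <;> decide
        exact noTriple m g1 g2
def zz (s1 s2 : Bool) : Fin 3 :=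
  if s1 = s2 then 0 else if s1 = false then 1 else 2

def z (n : ℕ) : Fin 3 := zz (tb n) (tb (n + 1))

lemma zstep {s1 s2 s3 s4 : Bool} (h : zz s1 s2 = zz s3 s4) : (s2 = s4) ↔ (s1 = s3) := by
  revert h; cases s1 <;> cases s2 <;> cases s3 <;> cases s4 <;> decide

lemma znz {s1 s2 s3 s4 : Bool} (h : zz s1 s2 = zz s3 s4) (hne : zz s1 s2 ≠ 0) : s1 = s3 := by
  revert h hne; cases s1 <;> cases s2 <;> cases s3 <;> cases s4 <;> decide

lemma zz0 {s1 s2 : Bool} (h : zz s1 s2 = 0) : s1 = s2 := by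
  revert h; cases s1 <;> cases s2 <;> decide

lemma zsf : ∀ K : ℕ, 0 < K → ∀ n : ℕ, ¬ (∀ u, u < K → z (n + u) = z (n + K + u)) := by
  intro K hK n H
  have Econst : ∀ u, u ≤ K → ((tb (n + u) = tb (n + u + K)) ↔ (tb n = tb (n + K))) := by
    intro u hu
    induction u with
    | zero => simp
    | succ w ihw =>
      have hw : w ≤ K := by omega
      have hzz : zz (tb (n + w)) (tb (n + w + 1)) = zz (tb (n + K + w)) (tb (n + K + w + 1)) :=
        H w (by omega)
      have hst := zstep hzz
      rw [show n + (w + 1) = n + w + 1 by omega, show n + w + 1 + K = n + K + w + 1 by omega]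
      refine hst.trans ?_
      rw [show n + K + w = n + w + K by omega]
      exact ihw hw
  by_cases hE : tb n = tb (n + K)
  · refine overlap K hK n (fun j hj => ?_)
    exact (Econst j hj).mpr hE
  · have chain : ∀ u, u ≤ K → tb (n + u) = tb n := by
      intro u hu
      induction u with
      | zero => simp
      | succ w ihw =>
        have hzz : zz (tb (n + w)) (tb (n + w + 1)) = zz (tb (n + K + w)) (tb (n + K + w + 1)) :=
          H w (by omega)
        by_cases h0 : zz (tb (n + w)) (tb (n + w + 1)) = 0
        · rw [show n + (w + 1) = n + w + 1 by omega, ← zz0 h0]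
          exact ihw (by omega)
        · exfalso
          have h1 : tb (n + w) = tb (n + K + w) := znz hzz h0
          apply hE
          refine (Econst w (by omega)).mp ?_
          rw [show n + w + K = n + K + w by omega]
          exact h1
    exact hE ((chain K le_rfl).symm.trans rfl ▸ (chain K le_rfl).symm)

def pat0 (r : ℕ) (v : Fin 3) : Fin 3 :=
  if r = 0 then 0 else if r = 1 then v + 1 else if r = 2 then 2 else 1

def pat (r : ℕ) (a b c d : Fin 3) (t : ℕ) : Fin 3 :=
  pat0 ((r + t) % 4) ([a, b, c, d].getD ((r + t) / 4) 0)

set_option maxRecDepth 10000 in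
lemma BASE : ∀ (r : Fin 4) (a b c d : Fin 3), a ≠ b → b ≠ c → c ≠ d → ¬(a = c ∧ b = d) →
    ∀ kk : Fin 5, ∃ t1 t2 : Fin 6, t1.val < kk.val + 2 ∧ t2.val < kk.val + 2 ∧
      ¬((pat r.val a b c d t1.val < pat r.val a b c d t2.val) ↔
        (pat r.val a b c d (t1.val + (kk.val + 2)) < pat r.val a b c d (t2.val + (kk.val + 2)))) := by
  decide
def x (n : ℕ) : Fin 3 := pat0 (n % 4) (z (n / 4))

lemma xm0 {m : ℕ} (h : m % 4 = 0) : x m = 0 := by unfold x pat0; rw [h]; simp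
lemma xm2 {m : ℕ} (h : m % 4 = 2) : x m = 2 := by unfold x pat0; rw [h]; simp
lemma xm3 {m : ℕ} (h : m % 4 = 3) : x m = 1 := by unfold x pat0; rw [h]; simp
lemma xm1 {m : ℕ} (h : m % 4 = 1) : x m = z (m / 4) + 1 := by unfold x pat0; rw [h]; simp

lemma zne (m : ℕ) : z m ≠ z (m + 1) := by
  intro h
  refine zsf 1 one_pos m (fun u hu => ?_)
  interval_cases u
  simpa using h

lemma znoabab (m : ℕ) : ¬(z m = z (m + 2) ∧ z (m + 1) = z (m + 3)) := by
  rintro ⟨h1, h2⟩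
  refine zsf 2 (by norm_num) m (fun u hu => ?_)
  interval_cases u
  · simpa using h1
  · rw [show m + 2 + 1 = m + 3 by omega, show m + 1 = m + 1 from rfl]
    exact h2

lemma xwin (i t : ℕ) (ht : t < 12) :
    x (i + t) = pat (i % 4) (z (i / 4)) (z (i / 4 + 1)) (z (i / 4 + 2)) (z (i / 4 + 3)) t := by
  unfold x pat
  have h1 : (i + t) % 4 = ((i % 4) + t) % 4 := by omega
  have h2 : (i + t) / 4 = i / 4 + ((i % 4) + t) / 4 := by omega
  rw [h1, h2]
  have hs : ((i % 4) + t) / 4 < 4 := by omega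
  set s := ((i % 4) + t) / 4 with hsdef
  clear_value s
  interval_cases s <;> simp [List.getD]

/-- There is an infinite word over the linearly ordered 3-letter alphabet `{0,1,2}` that
avoids order-preserving squares of length greater than 2: no fragment of length `2k` with
`k ≥ 2` splits into two halves that are order-preserving-equivalent. -/
theorem exists_infinite_op_square_free_ternary_word :
    ∃ x : ℕ → Fin 3, ∀ i k : ℕ, 2 ≤ k →
      ∀ u v : List (Fin 3), (List.range (2 * k)).map (fun t => x (i + t)) = u ++ v →
        u.length = v.length → ¬OpEquiv u v := by
  refine ⟨x, ?_⟩
  intro i k hk u v hL hlen hOp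
  obtain ⟨f, hmono, hmap⟩ := hOp
  have hrange : (List.range (2 * k)).map (fun t => x (i + t)) =
      (List.range k).map (fun t => x (i + t)) ++ (List.range k).map (fun t => x (i + (k + t))) := by
    rw [show 2 * k = k + k by ring, List.range_add, List.map_append, List.map_map]
    rfl
  have hlu : u.length = k := by
    have hlen2 := congrArg List.length hL
    simp only [List.length_map, List.length_range, List.length_append] at hlen2
    omega
  obtain ⟨hu, hv⟩ : u = (List.range k).map (fun t => x (i + t)) ∧
      v = (List.range k).map (fun t => x (i + (k + t))) := by
    have heq := hL.symm.trans hrange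
    have hA : u.length = ((List.range k).map (fun t => x (i + t))).length := by
      simp [hlu]
    exact List.append_inj heq hA
  subst hu hv
  have hfx : ∀ t, t < k → x (i + (k + t)) = f (x (i + t)) := by
    intro t ht
    have hgc := congrArg (fun l => l[t]?) hmap
    simp only [List.getElem?_map, List.getElem?_range, ht, if_true, Option.map_some] at hgc
    · simpa using hgc
  have hmem : ∀ t, t < k →
      x (i + t) ∈ {a | a ∈ (List.range k).map (fun t => x (i + t))} := by
    intro t ht
    exact Set.mem_setOf.mpr (List.mem_map.mpr ⟨t, List.mem_range.mpr ht, rfl⟩)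
  have CMP : ∀ t1 t2, t1 < k → t2 < k →
      ((x (i + t1) < x (i + t2)) ↔ (x (i + (k + t1)) < x (i + (k + t2)))) := by
    intro t1 t2 h1 h2
    rw [hfx t1 h1, hfx t2 h2]
    exact (hmono.lt_iff_lt (hmem t1 h1) (hmem t2 h2)).symm
  by_cases hk7 : k ≤ 6
  · -- small k : finite check
    have h4 : i % 4 < 4 := by omega
    have h5 : k - 2 < 5 := by omega
    obtain ⟨t1, t2, h1, h2, hne⟩ :=
      BASE ⟨i % 4, h4⟩ (z (i / 4)) (z (i / 4 + 1)) (z (i / 4 + 2)) (z (i / 4 + 3))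
        (zne (i / 4)) (zne (i / 4 + 1)) (zne (i / 4 + 2)) (znoabab (i / 4)) ⟨k - 2, h5⟩
    have hkv : (⟨k - 2, h5⟩ : Fin 5).val + 2 = k := by show k - 2 + 2 = k; omega
    rw [hkv] at h1 h2 hne
    have hne' : ¬((pat (i % 4) (z (i / 4)) (z (i / 4 + 1)) (z (i / 4 + 2)) (z (i / 4 + 3)) t1.val <
          pat (i % 4) (z (i / 4)) (z (i / 4 + 1)) (z (i / 4 + 2)) (z (i / 4 + 3)) t2.val) ↔
        (pat (i % 4) (z (i / 4)) (z (i / 4 + 1)) (z (i / 4 + 2)) (z (i / 4 + 3)) (t1.val + k) <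
          pat (i % 4) (z (i / 4)) (z (i / 4 + 1)) (z (i / 4 + 2)) (z (i / 4 + 3)) (t2.val + k))) :=
      hne
    apply hne'
    rw [← xwin i t1.val (by omega), ← xwin i t2.val (by omega),
      ← xwin i (t1.val + k) (by omega), ← xwin i (t2.val + k) (by omega),
      show t1.val + k = k + t1.val by omega, show t2.val + k = k + t2.val by omega]
    exact CMP t1.val t2.val (by omega) (by omega)
  · -- large k
    push_neg at hk7
    have hval : ∀ y : Fin 3, ∃ t, t < k ∧ x (i + t) = y := by
      intro y
      fin_cases y
      · exact ⟨(4 - i % 4) % 4, by omega, xm0 (by omega)⟩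
      · exact ⟨(7 - i % 4) % 4, by omega, xm3 (by omega)⟩
      · exact ⟨(6 - i % 4) % 4, by omega, xm2 (by omega)⟩
    have hfid : ∀ w : Fin 3, f w = w := by
      obtain ⟨t0, ht0, e0⟩ := hval 0
      obtain ⟨ta, hta, e1⟩ := hval 1
      obtain ⟨tc, htc, e2⟩ := hval 2
      have m0 := hmem t0 ht0; rw [e0] at m0
      have m1 := hmem ta hta; rw [e1] at m1
      have m2 := hmem tc htc; rw [e2] at m2
      have h01 : f 0 < f 1 := hmono m0 m1 (by decide)
      have h12 : f 1 < f 2 := hmono m1 m2 (by decide)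
      have v01 : (f 0).val < (f 1).val := h01
      have v12 : (f 1).val < (f 2).val := h12
      have b0 : (f 0).val < 3 := (f 0).isLt
      have b1 : (f 1).val < 3 := (f 1).isLt
      have b2 : (f 2).val < 3 := (f 2).isLt
      have e0 : f 0 = 0 := Fin.ext (show (f 0).val = 0 by omega)
      have e1 : f 1 = 1 := Fin.ext (show (f 1).val = 1 by omega)
      have e2 : f 2 = 2 := Fin.ext (show (f 2).val = 2 by omega)
      intro w
      fin_cases w
      exacts [e0, e1, e2]
    have EQ : ∀ t, t < k → x (i + (k + t)) = x (i + t) := fun t ht =>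
      (hfx t ht).trans (hfid _)
    set tp := (6 - i % 4) % 4 with htpdef
    have htp4 : (i + tp) % 4 = 2 := by omega
    have e2a : x (i + (k + tp)) = 2 := (EQ tp (by omega)).trans (xm2 htp4)
    have e2b : x (i + (k + (tp + 1))) = 1 := (EQ (tp + 1) (by omega)).trans (xm3 (by omega))
    have hk4 : k % 4 = 0 := by
      have hρ : (i + (k + tp)) % 4 < 4 := by omega
      set ρ := (i + (k + tp)) % 4 with hρdef
      interval_cases ρ
      · exact absurd (e2a.symm.trans (xm0 hρdef.symm)) (by decide)
      · exact absurd (e2b.symm.trans (xm2 (by omega))) (by decide)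
      · omega
      · exact absurd (e2a.symm.trans (xm3 hρdef.symm)) (by decide)
    set K := k / 4 with hKdef
    have hKk : k = 4 * K := by omega
    have hn0a : i ≤ 4 * ((i + 2) / 4) + 1 := by omega
    have hn0b : 4 * ((i + 2) / 4) + 1 ≤ i + 3 := by omega
    set n0 := (i + 2) / 4 with hn0def
    refine zsf K (by omega) n0 (fun w hw => ?_)
    have htk : (4 * n0 + 1 - i) + 4 * w < k := by omega
    have hEQ := EQ ((4 * n0 + 1 - i) + 4 * w) htk
    have hA : x (i + ((4 * n0 + 1 - i) + 4 * w)) = z (n0 + w) + 1 := by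
      rw [show i + ((4 * n0 + 1 - i) + 4 * w) = 4 * (n0 + w) + 1 by omega]
      rw [xm1 (by omega), show (4 * (n0 + w) + 1) / 4 = n0 + w by omega]
    have hB : x (i + (k + ((4 * n0 + 1 - i) + 4 * w))) = z (n0 + K + w) + 1 := by
      rw [show i + (k + ((4 * n0 + 1 - i) + 4 * w)) = 4 * (n0 + K + w) + 1 by omega]
      rw [xm1 (by omega), show (4 * (n0 + K + w) + 1) / 4 = n0 + K + w by omega]
    have hfin : z (n0 + w) + 1 = z (n0 + K + w) + 1 := hA.symm.trans (hEQ.symm.trans hB)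
    exact add_right_cancel hfin
end
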